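/- arXiv:1202.2786 — 12 statements merged into one kernel-verified Lean document; each statement's English description precedes it below -/
import Mathlib

section
/- Let y : ℝ → ℝ satisfy y(0) = −1 and y'(x) = x² + y(x)²/4 for every x in [0, 0.2]. Then for every x in [0, 0.2], y(x) ≤ ((2/5)·tan(x/10) − 1)/(1 + x/4). -/
/-- If `y 0 = -1` and `y' x = x² + y(x)²/4` on `[0, 0.2]`, then
`y x ≤ ((2/5)·tan(x/10) - 1)/(1 + x/4)` on `[0, 0.2]`. -/
theorem riccati_upper_estimate (y : ℝ → ℝ) (h0 : y 0 = -1)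
    (hde : ∀ x ∈ Set.Icc (0 : ℝ) 0.2, HasDerivAt y (x ^ 2 + (y x) ^ 2 / 4) x) :
    ∀ x ∈ Set.Icc (0 : ℝ) 0.2,
      y x ≤ ((2 / 5) * Real.tan (x / 10) - 1) / (1 + x / 4) := by
  -- Step 1: compare `y` with the strict supersolution `B x = -1 + (53/200) x`.
  have key : ∀ ⦃x⦄, x ∈ Set.Icc (0 : ℝ) 0.2 → y x ≤ -1 + (53 / 200) * x := by
    apply image_le_of_deriv_right_lt_deriv_boundary
      (f' := fun x => x ^ 2 + (y x) ^ 2 / 4) (B := fun x => -1 + (53 / 200) * x)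
      (B' := fun _ => (53 : ℝ) / 200)
    · exact fun x hx => (hde x hx).continuousAt.continuousWithinAt
    · exact fun x hx => (hde x (Set.mem_Icc_of_Ico hx)).hasDerivWithinAt
    · rw [h0]; norm_num
    · intro x
      simpa using ((hasDerivAt_id x).const_mul ((53 : ℝ) / 200)).const_add (-1 : ℝ)
    · intro x hx heq
      obtain ⟨hx0, hx1⟩ := hx
      rw [heq]
      nlinarith [sq_nonneg x, mul_nonneg hx0 (le_of_lt (sub_pos.mpr hx1)), sq_nonneg (x - 0.2)]
  intro x hx
  obtain ⟨hx0, hx1⟩ := hx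
  refine (key ⟨hx0, hx1⟩).trans ?_
  -- Step 2: `-1 + (53/200) x ≤ (x/25 - 1)/(1 + x/4) ≤ ((2/5) tan (x/10) - 1)/(1 + x/4)`.
  have hden : (0 : ℝ) < 1 + x / 4 := by linarith
  have htan : x / 10 ≤ Real.tan (x / 10) := by
    rcases eq_or_lt_of_le hx0 with h | h
    · simp [← h]
    · have h1 : 0 < x / 10 := by linarith
      have h2 : x / 10 < Real.pi / 2 := by
        have := Real.pi_gt_three
        linarith
      exact le_of_lt (Real.lt_tan h1 h2)
  rw [le_div_iff₀ hden]
  nlinarith [mul_nonneg hx0 hx0]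
end

section
/- The function g(x) := ((2/5)·tan(x/10) − 1)/(1 + x/4) is strictly monotonically increasing on the interval [0, 0.2]. -/
/-- The function `x ↦ ((2/5)·tan(x/10) - 1)/(1 + x/4)` is strictly
monotonically increasing on `[0, 0.2]`. -/
theorem estimate_strictMonoOn :
    StrictMonoOn (fun x : ℝ => ((2 / 5) * Real.tan (x / 10) - 1) / (1 + x / 4))
      (Set.Icc (0 : ℝ) 0.2) := by
  have hpi : (3 : ℝ) < Real.pi := Real.pi_gt_three
  intro x hx y hy hxy
  obtain ⟨hx0, hx2⟩ := hx
  obtain ⟨hy0, hy2⟩ := hy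
  have hmemx : x / 10 ∈ Set.Ioo (-(Real.pi / 2)) (Real.pi / 2) := by
    constructor <;> nlinarith
  have hmemy : y / 10 ∈ Set.Ioo (-(Real.pi / 2)) (Real.pi / 2) := by
    constructor <;> nlinarith
  have hmem4 : Real.pi / 4 ∈ Set.Ioo (-(Real.pi / 2)) (Real.pi / 2) := by
    constructor <;> nlinarith
  have htan : Real.tan (x / 10) < Real.tan (y / 10) :=
    Real.strictMonoOn_tan hmemx hmemy (by linarith)
  have htan1 : Real.tan (y / 10) < 1 := by
    have := Real.strictMonoOn_tan hmemy hmem4 (by nlinarith)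
    rwa [Real.tan_pi_div_four] at this
  have hay : (2 / 5) * Real.tan (y / 10) - 1 < 0 := by nlinarith
  have hax : (2 / 5) * Real.tan (x / 10) - 1 < 0 := by nlinarith
  have hbx : (0 : ℝ) < 1 + x / 4 := by linarith
  have hby : (0 : ℝ) < 1 + y / 4 := by linarith
  simp only
  rw [div_lt_div_iff₀ hbx hby]
  nlinarith
end

section
/- Let y : ℝ → ℝ satisfy y(0) = −1 and y'(x) = x² + y(x)²/4 for every x in [0, 0.2]. Then for every x in [0, 0.2], −1 ≤ y(x) ≤ −0.94. -/
open Set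

/-- If `y 0 = -1` and `y' x = x² + y(x)²/4` on `[0, 0.2]`, then
`-1 ≤ y x ≤ -0.94` on `[0, 0.2]`. -/
theorem riccati_y_bounds (y : ℝ → ℝ) (h0 : y 0 = -1)
    (hde : ∀ x ∈ Set.Icc (0 : ℝ) 0.2, HasDerivAt y (x ^ 2 + (y x) ^ 2 / 4) x) :
    ∀ x ∈ Set.Icc (0 : ℝ) 0.2, -1 ≤ y x ∧ y x ≤ -0.94 := by
  have hcont : ContinuousOn y (Icc (0:ℝ) 0.2) := fun x hx =>
    ((hde x hx).continuousAt).continuousWithinAt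
  -- monotonicity
  have hmono : ∀ a ∈ Icc (0:ℝ) 0.2, ∀ b ∈ Icc (0:ℝ) 0.2, a ≤ b → y a ≤ y b := by
    intro a ha b hb hab
    rcases eq_or_lt_of_le hab with rfl | h
    · exact le_rfl
    · obtain ⟨c, hc, hc'⟩ := exists_hasDerivAt_eq_slope y (fun x => x ^ 2 + (y x) ^ 2 / 4) h
        (hcont.mono (Icc_subset_Icc ha.1 hb.2))
        (fun x hx => hde x ⟨le_of_lt (lt_of_le_of_lt ha.1 hx.1),
          le_of_lt (lt_of_lt_of_le hx.2 hb.2)⟩)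
      have h1 : (0:ℝ) ≤ c ^ 2 + (y c) ^ 2 / 4 := by positivity
      rw [hc'] at h1
      have h2 : (0:ℝ) < b - a := by linarith
      have h3 := mul_nonneg h1 h2.le
      rw [div_mul_cancel₀ _ (ne_of_gt h2)] at h3
      linarith
  have hlb : ∀ x ∈ Icc (0:ℝ) 0.2, -1 ≤ y x := by
    intro x hx
    have := hmono 0 ⟨le_rfl, by norm_num⟩ x hx hx.1
    linarith [h0 ▸ this]
  -- key claim: y ≤ -0.9 on the interval
  have key : ∀ x ∈ Icc (0:ℝ) 0.2, y x ≤ -0.9 := by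
    by_contra hcon
    push_neg at hcon
    obtain ⟨x0, hx0, hx0'⟩ := hcon
    set B := {x | x ∈ Icc (0:ℝ) 0.2 ∧ -0.9 ≤ y x} with hBdef
    have hBne : B.Nonempty := ⟨x0, hx0, le_of_lt hx0'⟩
    have hBclosed : IsClosed B := by
      have hBeq : B = Icc (0:ℝ) 0.2 ∩ y ⁻¹' Ici (-0.9) := by
        ext z
        simp [hBdef, Set.mem_inter_iff, Set.mem_preimage]
      rw [hBeq]
      exact hcont.preimage_isClosed_of_isClosed isClosed_Icc isClosed_Ici
    have hBbdd : BddBelow B := ⟨0, fun z hz => hz.1.1⟩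
    set t := sInf B with ht
    have htB : t ∈ B := hBclosed.csInf_mem hBne hBbdd
    have ht0 : 0 < t := by
      rcases lt_or_eq_of_le htB.1.1 with h | h
      · exact h
      · exfalso
        have h2 := htB.2
        rw [← h, h0] at h2
        norm_num at h2
    obtain ⟨c, hc, hc'⟩ := exists_hasDerivAt_eq_slope y (fun x => x ^ 2 + (y x) ^ 2 / 4) ht0
      (hcont.mono (Icc_subset_Icc le_rfl htB.1.2))
      (fun x hx => hde x ⟨le_of_lt hx.1, le_of_lt (lt_of_lt_of_le hx.2 htB.1.2)⟩)
    have hcIcc : c ∈ Icc (0:ℝ) 0.2 := ⟨le_of_lt hc.1, le_trans (le_of_lt hc.2) htB.1.2⟩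
    have hyc_lb : -1 ≤ y c := hlb c hcIcc
    have hyc_ub : y c < -0.9 := by
      by_contra h
      push_neg at h
      have hmem : c ∈ B := ⟨hcIcc, h⟩
      have := csInf_le hBbdd hmem
      linarith [hc.2]
    have heq : y t - y 0 = (c ^ 2 + (y c) ^ 2 / 4) * t := by
      have h4 := (div_eq_iff (by linarith : t - 0 ≠ 0)).mp hc'.symm
      rw [sub_zero] at h4
      linarith [h4]
    have hc2 : c ^ 2 ≤ 0.04 := by nlinarith [hcIcc.1, hcIcc.2]
    have hy2 : (y c) ^ 2 ≤ 1 := by nlinarith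
    have htub : t ≤ 0.2 := htB.1.2
    have hyt : -0.9 ≤ y t := htB.2
    nlinarith [ht0.le]
  intro x hx
  refine ⟨hlb x hx, ?_⟩
  rcases eq_or_lt_of_le hx.1 with h | h
  · rw [← h, h0]; norm_num
  · obtain ⟨c, hc, hc'⟩ := exists_hasDerivAt_eq_slope y (fun x => x ^ 2 + (y x) ^ 2 / 4) h
      (hcont.mono (Icc_subset_Icc le_rfl hx.2))
      (fun z hz => hde z ⟨le_of_lt hz.1, le_of_lt (lt_of_lt_of_le hz.2 hx.2)⟩)
    have hcIcc : c ∈ Icc (0:ℝ) 0.2 := ⟨le_of_lt hc.1, le_trans (le_of_lt hc.2) hx.2⟩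
    have hyc_lb : -1 ≤ y c := hlb c hcIcc
    have hyc_ub : y c ≤ -0.9 := key c hcIcc
    have heq : y x - y 0 = (c ^ 2 + (y c) ^ 2 / 4) * x := by
      have h4 := (div_eq_iff (by linarith : x - 0 ≠ 0)).mp hc'.symm
      rw [sub_zero] at h4
      linarith [h4]
    have hc2 : c ^ 2 ≤ 0.04 := by nlinarith [hcIcc.1, hcIcc.2]
    have hy2 : (y c) ^ 2 ≤ 1 := by nlinarith
    nlinarith [h.le, hx.2]
end

section
/- Let y : ℝ → ℝ be infinitely differentiable on an open interval containing [0, 0.2], satisfying y(0) = −1 and y'(x) = x² + y(x)²/4 there. Then for every x in [0, 0.2], 0.22 ≤ y'(x) ≤ 0.29. -/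
/-- If `y` is infinitely differentiable on an open interval containing
`[0, 0.2]`, with `y 0 = -1` and `y' x = x² + y(x)²/4` there, then
`0.22 ≤ y⁽1⁾ x ≤ 0.29` for all `x ∈ [0, 0.2]`. -/
theorem riccati_deriv1_bounds (y : ℝ → ℝ) (s : Set ℝ) (hs : IsOpen s)
    (hsub : Set.Icc (0 : ℝ) 0.2 ⊆ s) (hsmooth : ContDiffOn ℝ (⊤ : ℕ∞) y s)
    (h0 : y 0 = -1)
    (hde : ∀ x ∈ s, HasDerivAt y (x ^ 2 + (y x) ^ 2 / 4) x) :
    ∀ x ∈ Set.Icc (0 : ℝ) 0.2,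
      0.22 ≤ iteratedDeriv 1 y x ∧ iteratedDeriv 1 y x ≤ 0.29 := by
  have hcont : ContinuousOn y (Set.Icc (0:ℝ) 0.2) :=
    (hsmooth.continuousOn).mono hsub
  -- upper barrier : y x ≤ -1 + 0.3 x on [0, 0.2]
  have hup : ∀ ⦃x⦄, x ∈ Set.Icc (0:ℝ) 0.2 → y x ≤ -1 + 0.3 * x := by
    apply image_le_of_deriv_right_lt_deriv_boundary (f' := fun x => x ^ 2 + (y x) ^ 2 / 4)
      (B := fun x => -1 + 0.3 * x) (B' := fun _ => (0.3 : ℝ))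
    · exact hcont
    · intro x hx
      exact (hde x (hsub ⟨hx.1, hx.2.le⟩)).hasDerivWithinAt
    · rw [h0]; norm_num
    · intro x
      simpa using ((hasDerivAt_id x).const_mul (0.3 : ℝ)).const_add (-1 : ℝ)
    · intro x hx heq
      have h1 : (-1 : ℝ) ≤ -1 + 0.3 * x := by nlinarith [hx.1]
      have h2 : -1 + 0.3 * x ≤ (0 : ℝ) := by nlinarith [hx.2]
      have : (y x) ^ 2 ≤ 1 := by rw [heq]; nlinarith
      nlinarith [hx.2, sq_nonneg x]
  -- monotonicity : y x ≥ -1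
  have hmono : MonotoneOn y (Set.Icc (0:ℝ) 0.2) := by
    apply monotoneOn_of_deriv_nonneg (convex_Icc _ _) hcont
    · intro x hx
      have hxs : x ∈ s := hsub (interior_subset hx)
      exact (hde x hxs).differentiableAt.differentiableWithinAt
    · intro x hx
      have hxs : x ∈ s := hsub (interior_subset hx)
      rw [(hde x hxs).deriv]
      positivity
  intro x hx
  have hxs : x ∈ s := hsub hx
  have hlo : (-1 : ℝ) ≤ y x := h0 ▸ hmono (by norm_num) hx hx.1
  have hhi : y x ≤ -0.94 := by
    have := hup hx
    nlinarith [hx.2]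
  have hd : iteratedDeriv 1 y x = x ^ 2 + (y x) ^ 2 / 4 := by
    rw [iteratedDeriv_one, (hde x hxs).deriv]
  rw [hd]
  constructor <;> nlinarith [hx.1, hx.2, sq_nonneg x]
end

section
/- Let y : ℝ → ℝ be infinitely differentiable on an open interval containing [0, 0.2], satisfying y(0) = −1 and y'(x) = x² + y(x)²/4 there. Then for every x in [0, 0.2], 1.87 ≤ y'''(x) ≤ 2.12. -/
lemma riccati_aux (x v : ℝ) (hx0 : 0 ≤ x) (hx1 : x ≤ 0.2) (hv0 : -1 ≤ v) (hv1 : v ≤ -0.941) :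
    1.87 ≤ 2 + (x^2 + v^2/4)^2/2 + v * (2*x + v*(x^2 + v^2/4)/2)/2 ∧
    2 + (x^2 + v^2/4)^2/2 + v * (2*x + v*(x^2 + v^2/4)/2)/2 ≤ 2.12 := by
  set a := x^2 + v^2/4 with ha
  have ha1 : 0.2213 ≤ a := by
    nlinarith [sq_nonneg x, mul_nonneg (by linarith : (0:ℝ) ≤ -(v+0.941)) (by linarith : (0:ℝ) ≤ -(v-0.941))]
  have ha2 : a ≤ 0.29 := by
    nlinarith [mul_nonneg (by linarith : (0:ℝ) ≤ v+1) (by linarith : (0:ℝ) ≤ 1-v), mul_nonneg hx0 (by linarith : (0:ℝ) ≤ 0.2 - x)]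
  set b := 2*x + v*a/2 with hb
  have hb1 : -0.145 ≤ b := by
    nlinarith [mul_nonneg (by linarith : (0:ℝ) ≤ v+1) ((by norm_num : (0:ℝ) ≤ 0.2213).trans ha1)]
  have hb2 : b ≤ 0.2959 := by
    nlinarith [mul_nonneg (by linarith : (0:ℝ) ≤ -(v+0.941)) ((by norm_num : (0:ℝ) ≤ 0.2213).trans ha1)]
  constructor
  · nlinarith [mul_nonneg (by linarith : (0:ℝ) ≤ v+1) (by linarith : (0:ℝ) ≤ b + 0.145), sq_nonneg (a - 0.2213)]
  · nlinarith [mul_nonneg (by linarith : (0:ℝ) ≤ -(v+0.941)) (by linarith : (0:ℝ) ≤ b + 0.145), mul_nonneg (by linarith : (0:ℝ) ≤ a - 0.2213) (by linarith : (0:ℝ) ≤ 0.29 - a)]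

/-- If `y` is infinitely differentiable on an open interval containing
`[0, 0.2]`, with `y 0 = -1` and `y' x = x² + y(x)²/4` there, then
`1.87 ≤ y⁽3⁾ x ≤ 2.12` for all `x ∈ [0, 0.2]`. -/
theorem riccati_deriv3_bounds (y : ℝ → ℝ) (s : Set ℝ) (hs : IsOpen s)
    (hsub : Set.Icc (0 : ℝ) 0.2 ⊆ s) (hsmooth : ContDiffOn ℝ (⊤ : ℕ∞) y s)
    (h0 : y 0 = -1)
    (hde : ∀ x ∈ s, HasDerivAt y (x ^ 2 + (y x) ^ 2 / 4) x) :
    ∀ x ∈ Set.Icc (0 : ℝ) 0.2,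
      1.87 ≤ iteratedDeriv 3 y x ∧ iteratedDeriv 3 y x ≤ 2.12 := by
  have hcont : ContinuousOn y s := fun x hx => (hde x hx).continuousAt.continuousWithinAt
  -- y is monotone on [0, 0.2]
  have hmono : MonotoneOn y (Set.Icc (0:ℝ) 0.2) := by
    apply monotoneOn_of_deriv_nonneg (convex_Icc _ _) (hcont.mono hsub)
    · intro t ht
      exact ((hde t (hsub (interior_subset ht))).differentiableAt).differentiableWithinAt
    · intro t ht
      rw [(hde t (hsub (interior_subset ht))).deriv]
      positivity
  have hlow : ∀ x ∈ Set.Icc (0:ℝ) 0.2, -1 ≤ y x := by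
    intro x hx
    have := hmono (Set.left_mem_Icc.2 (by norm_num)) hx hx.1
    rw [h0] at this; exact this
  -- key MVT step
  have hub : ∀ c ∈ Set.Icc (0:ℝ) 0.2, (∀ t ∈ Set.Ico (0:ℝ) c, y t ≤ -0.941) → y c ≤ -0.942 := by
    intro c hc hsmall
    have hIccsub : Set.Icc (0:ℝ) c ⊆ Set.Icc (0:ℝ) 0.2 := Set.Icc_subset_Icc le_rfl hc.2
    have hf : MonotoneOn (fun t => 0.29 * t - y t) (Set.Icc (0:ℝ) c) := by
      apply monotoneOn_of_deriv_nonneg (convex_Icc _ _)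
      · exact ((continuous_const.mul continuous_id).continuousOn).sub
          ((hcont.mono hsub).mono hIccsub)
      · intro t ht
        have hts : t ∈ s := hsub (hIccsub (interior_subset ht))
        exact (((hasDerivAt_id t).const_mul 0.29).sub (hde t hts)).differentiableAt.differentiableWithinAt
      · intro t ht
        rw [interior_Icc] at ht
        have hts : t ∈ s := hsub (hIccsub ⟨ht.1.le, ht.2.le⟩)
        have hdf : HasDerivAt (fun t => 0.29 * t - y t) (0.29 - (t ^ 2 + (y t) ^ 2 / 4)) t := by
          exact (((hasDerivAt_id t).const_mul 0.29).sub (hde t hts)).congr_deriv (by simp)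
        rw [hdf.deriv]
        have ht02 : t ∈ Set.Icc (0:ℝ) 0.2 := hIccsub ⟨ht.1.le, ht.2.le⟩
        have h1 : -1 ≤ y t := hlow t ht02
        have h2 : y t ≤ -0.941 := hsmall t ⟨ht.1.le, ht.2⟩
        have h3 : t ≤ 0.2 := ht02.2
        have h4 : 0 ≤ t := ht02.1
        nlinarith [mul_nonneg (by linarith : (0:ℝ) ≤ y t + 1) (by linarith : (0:ℝ) ≤ 1 - y t),
          mul_nonneg h4 (by linarith : (0:ℝ) ≤ 0.2 - t)]
    have h01 : (0:ℝ) ∈ Set.Icc (0:ℝ) c := Set.left_mem_Icc.2 hc.1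
    have hc1 : c ∈ Set.Icc (0:ℝ) c := Set.right_mem_Icc.2 hc.1
    have := hf h01 hc1 hc.1
    simp only [mul_zero, zero_sub, h0] at this
    -- 1 ≤ 0.29 c - y c
    have : y c ≤ -1 + 0.29 * c := by linarith
    linarith [hc.2]
  -- y x ≤ -0.941 on [0, 0.2]
  have h941 : ∀ x ∈ Set.Icc (0:ℝ) 0.2, y x ≤ -0.941 := by
    by_contra hcon
    push_neg at hcon
    obtain ⟨x0, hx0, hx0'⟩ := hcon
    set T := Set.Icc (0:ℝ) 0.2 ∩ y ⁻¹' Set.Ici (-0.941) with hT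
    have hTc : IsClosed T :=
      (hcont.mono hsub).preimage_isClosed_of_isClosed isClosed_Icc isClosed_Ici
    have hTne : T.Nonempty := ⟨x0, hx0, hx0'.le⟩
    have hTbdd : BddBelow T := ⟨0, fun t ht => ht.1.1⟩
    have hcmem : sInf T ∈ T := hTc.csInf_mem hTne hTbdd
    have hlt : ∀ t ∈ Set.Ico (0:ℝ) (sInf T), y t ≤ -0.941 := by
      intro t ht
      by_contra h
      push_neg at h
      have htT : t ∈ T := ⟨⟨ht.1, ht.2.le.trans hcmem.1.2⟩, h.le⟩
      exact absurd (csInf_le hTbdd htT) (not_le.2 ht.2)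
    have h1 := hub (sInf T) hcmem.1 hlt
    have h2 : -0.941 ≤ y (sInf T) := hcmem.2
    linarith
  have hkey : ∀ x ∈ Set.Icc (0:ℝ) 0.2, y x ≤ -0.941 := h941
  -- derivative computations
  have hg1 : ∀ x ∈ s, HasDerivAt (fun t => t^2 + (y t)^2/4)
      (2*x + y x * (x^2 + (y x)^2/4) / 2) x := by
    intro x hx
    have h := (hasDerivAt_pow 2 x).add (((hde x hx).pow 2).div_const 4)
    refine h.congr_deriv ?_
    push_cast
    ring
  have hd2 : ∀ x ∈ s, deriv (deriv y) x = 2*x + y x * (x^2 + (y x)^2/4) / 2 := by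
    intro x hx
    have hev : deriv y =ᶠ[nhds x] (fun t => t^2 + (y t)^2/4) :=
      Filter.eventually_of_mem (hs.mem_nhds hx) (fun t ht => (hde t ht).deriv)
    rw [hev.deriv_eq, (hg1 x hx).deriv]
  have hg2 : ∀ x ∈ s, HasDerivAt (fun t => 2*t + y t * (t^2 + (y t)^2/4) / 2)
      (2 + (x^2 + (y x)^2/4)^2/2 + y x * (2*x + y x * (x^2 + (y x)^2/4)/2) / 2) x := by
    intro x hx
    have h := ((hasDerivAt_id x).const_mul 2).add (((hde x hx).mul (hg1 x hx)).div_const 2)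
    refine h.congr_deriv ?_
    simp only [id_eq, mul_one]
    ring
  have hd3 : ∀ x ∈ s, deriv (deriv (deriv y)) x =
      2 + (x^2 + (y x)^2/4)^2/2 + y x * (2*x + y x * (x^2 + (y x)^2/4)/2) / 2 := by
    intro x hx
    have hev : deriv (deriv y) =ᶠ[nhds x] (fun t => 2*t + y t * (t^2 + (y t)^2/4) / 2) :=
      Filter.eventually_of_mem (hs.mem_nhds hx) (fun t ht => hd2 t ht)
    rw [hev.deriv_eq, (hg2 x hx).deriv]
  intro x hx
  have hxs : x ∈ s := hsub hx
  have hiter : iteratedDeriv 3 y x = deriv (deriv (deriv y)) x := by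
    simp [iteratedDeriv_succ, iteratedDeriv_zero]
  rw [hiter, hd3 x hxs]
  exact riccati_aux x (y x) hx.1 hx.2 (hlow x hx) (hkey x hx)
end

section
/- Let y : ℝ → ℝ be infinitely differentiable on an open interval containing [0, 0.2], satisfying y(0) = −1 and y'(x) = x² + y(x)²/4 there. Then for every x in [0, 0.2], −1.13 ≤ y⁽⁴⁾(x) ≤ −0.74. -/
set_option maxHeartbeats 2000000 in
/-- If `y` is infinitely differentiable on an open interval containing
`[0, 0.2]`, with `y 0 = -1` and `y' x = x² + y(x)²/4` there, then
`-1.13 ≤ y⁽4⁾ x ≤ -0.74` for all `x ∈ [0, 0.2]`. -/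
theorem riccati_deriv4_bounds (y : ℝ → ℝ) (s : Set ℝ) (hs : IsOpen s)
    (hsub : Set.Icc (0 : ℝ) 0.2 ⊆ s) (hsmooth : ContDiffOn ℝ (⊤ : ℕ∞) y s)
    (h0 : y 0 = -1)
    (hde : ∀ x ∈ s, HasDerivAt y (x ^ 2 + (y x) ^ 2 / 4) x) :
    ∀ x ∈ Set.Icc (0 : ℝ) 0.2,
      -1.13 ≤ iteratedDeriv 4 y x ∧ iteratedDeriv 4 y x ≤ -0.74 := by
  obtain ⟨d1, hd1⟩ : ∃ d1 : ℝ → ℝ, ∀ x, d1 x = x ^ 2 + (y x) ^ 2 / 4 :=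
    ⟨_, fun _ => rfl⟩
  obtain ⟨d2, hd2⟩ : ∃ d2 : ℝ → ℝ, ∀ x, d2 x = 2 * x + y x * d1 x / 2 :=
    ⟨_, fun _ => rfl⟩
  obtain ⟨d3, hd3⟩ : ∃ d3 : ℝ → ℝ, ∀ x, d3 x = 2 + (d1 x ^ 2 + y x * d2 x) / 2 :=
    ⟨_, fun _ => rfl⟩
  obtain ⟨d4, hd4⟩ : ∃ d4 : ℝ → ℝ, ∀ x, d4 x = (3 * d1 x * d2 x + y x * d3 x) / 2 :=
    ⟨_, fun _ => rfl⟩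
  have h1 : ∀ x ∈ s, HasDerivAt y (d1 x) x := by
    intro x hx; rw [hd1]; exact hde x hx
  have h2 : ∀ x ∈ s, HasDerivAt d1 (d2 x) x := by
    intro x hx
    have hy := h1 x hx
    have h := (hasDerivAt_pow 2 x).add ((hy.pow 2).div_const 4)
    have hfun : d1 = fun t => t ^ 2 + (y t) ^ 2 / 4 := funext hd1
    rw [hfun]
    convert h using 1
    · rfl
    · rfl
    · rfl
    rw [hd2, hd1]; ring
  have h3 : ∀ x ∈ s, HasDerivAt d2 (d3 x) x := by
    intro x hx
    have hy := h1 x hx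
    have hdd1 := h2 x hx
    have h := ((hasDerivAt_id x).const_mul 2).add ((hy.mul hdd1).div_const 2)
    have hfun : d2 = fun t => 2 * t + y t * d1 t / 2 := funext hd2
    rw [hfun]
    convert h using 1
    · rfl
    · rfl
    · rfl
    rw [hd3]; ring
  have h4 : ∀ x ∈ s, HasDerivAt d3 (d4 x) x := by
    intro x hx
    have hy := h1 x hx
    have hdd1 := h2 x hx
    have hdd2 := h3 x hx
    have h := (((hdd1.pow 2).add (hy.mul hdd2)).div_const 2).const_add 2
    have hfun : d3 = fun t => 2 + (d1 t ^ 2 + y t * d2 t) / 2 := funext hd3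
    rw [hfun]
    convert h using 1
    · rfl
    · rfl
    · rfl
    rw [hd4]; ring
  -- iterated derivative identity
  have E1 : ∀ x ∈ s, deriv y x = d1 x := fun x hx => (h1 x hx).deriv
  have E2 : ∀ x ∈ s, deriv (deriv y) x = d2 x := by
    intro x hx
    have hev : deriv y =ᶠ[nhds x] d1 := by
      filter_upwards [hs.mem_nhds hx] with t ht using E1 t ht
    rw [hev.deriv_eq]
    exact (h2 x hx).deriv
  have E3 : ∀ x ∈ s, deriv (deriv (deriv y)) x = d3 x := by
    intro x hx
    have hev : deriv (deriv y) =ᶠ[nhds x] d2 := by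
      filter_upwards [hs.mem_nhds hx] with t ht using E2 t ht
    rw [hev.deriv_eq]
    exact (h3 x hx).deriv
  have E4 : ∀ x ∈ s, deriv (deriv (deriv (deriv y))) x = d4 x := by
    intro x hx
    have hev : deriv (deriv (deriv y)) =ᶠ[nhds x] d3 := by
      filter_upwards [hs.mem_nhds hx] with t ht using E3 t ht
    rw [hev.deriv_eq]
    exact (h4 x hx).deriv
  have Eit : ∀ x ∈ s, iteratedDeriv 4 y x = d4 x := by
    intro x hx
    have : iteratedDeriv 4 y = deriv (deriv (deriv (deriv y))) := by
      rw [iteratedDeriv_succ, iteratedDeriv_succ, iteratedDeriv_succ, iteratedDeriv_one]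
    rw [this]
    exact E4 x hx
  -- monotonicity of y on [0, 0.2]
  have hcont : ContinuousOn y (Set.Icc (0:ℝ) 0.2) := fun x hx =>
    ((h1 x (hsub hx)).continuousAt).continuousWithinAt
  have hmono : MonotoneOn y (Set.Icc (0:ℝ) 0.2) := by
    apply monotoneOn_of_deriv_nonneg (convex_Icc 0 0.2) hcont
    · intro x hx
      have hx' : x ∈ s := hsub (interior_subset hx)
      exact ((h1 x hx').differentiableAt).differentiableWithinAt
    · intro x hx
      have hx' : x ∈ s := hsub (interior_subset hx)
      rw [E1 x hx', hd1]
      positivity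
  have hlow : ∀ t ∈ Set.Icc (0:ℝ) 0.2, -1 ≤ y t := by
    intro t ht
    have h00 : (0:ℝ) ∈ Set.Icc (0:ℝ) 0.2 := by norm_num
    have := hmono h00 ht ht.1
    linarith [h0 ▸ this]
  -- MVT-based upper bound
  have key : ∀ b ∈ Set.Icc (0:ℝ) 0.2, (∀ t ∈ Set.Icc (0:ℝ) b, y t ≤ -0.9) →
      y b ≤ -1 + 0.29 * b := by
    intro b hb hyb
    have hbI : Set.Icc (0:ℝ) b ⊆ Set.Icc (0:ℝ) 0.2 := Set.Icc_subset_Icc le_rfl hb.2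
    have hder : ∀ t ∈ Set.Icc (0:ℝ) b, HasDerivWithinAt y (d1 t) (Set.Icc (0:ℝ) b) t :=
      fun t ht => (h1 t (hsub (hbI ht))).hasDerivWithinAt
    have hbound : ∀ t ∈ Set.Icc (0:ℝ) b, ‖d1 t‖ ≤ 0.29 := by
      intro t ht
      have ht2 : t ∈ Set.Icc (0:ℝ) 0.2 := hbI ht
      have hl := hlow t ht2
      have hu := hyb t ht
      rw [Real.norm_eq_abs, abs_le, hd1]
      constructor
      · nlinarith [sq_nonneg t, sq_nonneg (y t)]
      · nlinarith [ht2.1, ht2.2]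
    have hmvt := Convex.norm_image_sub_le_of_norm_hasDerivWithin_le hder hbound
      (convex_Icc (0:ℝ) b) (Set.left_mem_Icc.2 hb.1) (Set.right_mem_Icc.2 hb.1)
    rw [h0, Real.norm_eq_abs, Real.norm_eq_abs] at hmvt
    have h1' := (abs_le.1 hmvt).2
    have hbb : |b - 0| = b := by rw [sub_zero, abs_of_nonneg hb.1]
    rw [hbb] at h1'
    linarith
  -- y ≤ -0.9 on all of [0, 0.2]
  have hup9 : ∀ t ∈ Set.Icc (0:ℝ) 0.2, y t ≤ -0.9 := by
    set A : Set ℝ := {t | t ∈ Set.Icc (0:ℝ) 0.2 ∧ y t ≤ -0.9} with hA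
    have h0A : (0:ℝ) ∈ A := by
      constructor
      · norm_num
      · rw [h0]; norm_num
    have hAne : A.Nonempty := ⟨0, h0A⟩
    have hAbdd : BddAbove A := ⟨0.2, fun t ht => ht.1.2⟩
    set c := sSup A with hc
    have hc0 : 0 ≤ c := le_csSup hAbdd h0A
    have hc2 : c ≤ 0.2 := csSup_le hAne fun t ht => ht.1.2
    have hcI : c ∈ Set.Icc (0:ℝ) 0.2 := ⟨hc0, hc2⟩
    have hccl : c ∈ closure A := csSup_mem_closure hAne hAbdd
    have hyc : y c ≤ -0.9 := by
      by_contra hcon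
      push_neg at hcon
      have hca : ContinuousAt y c := (h1 c (hsub hcI)).continuousAt
      have hev : ∀ᶠ t in nhds c, -0.9 < y t := hca.eventually (eventually_gt_nhds hcon)
      obtain ⟨δ, hδ, hδ'⟩ := Metric.eventually_nhds_iff.1 hev
      obtain ⟨t, htA, htd⟩ := Metric.mem_closure_iff.1 hccl δ hδ
      have := hδ' (by rwa [dist_comm] at htd)
      linarith [htA.2]
    -- so y c ≤ -0.942 via key
    have hkc : y c ≤ -1 + 0.29 * c := by
      apply key c hcI
      intro t ht
      have htI : t ∈ Set.Icc (0:ℝ) 0.2 := Set.Icc_subset_Icc le_rfl hc2 ht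
      calc y t ≤ y c := hmono htI hcI ht.2
        _ ≤ -0.9 := hyc
    have hc942 : y c ≤ -0.942 := by nlinarith
    -- c must equal 0.2
    have hceq : c = 0.2 := by
      by_contra hne
      have hclt : c < 0.2 := lt_of_le_of_ne hc2 hne
      have hca : ContinuousAt y c := (h1 c (hsub hcI)).continuousAt
      have hev : ∀ᶠ t in nhds c, y t < -0.9 := hca.eventually (eventually_lt_nhds (by linarith : y c < -0.9))
      obtain ⟨δ, hδ, hδ'⟩ := Metric.eventually_nhds_iff.1 hev
      set t0 := min (c + δ / 2) 0.2 with ht0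
      have ht0c : c < t0 := lt_min (by linarith) hclt
      have ht0I : t0 ∈ Set.Icc (0:ℝ) 0.2 := ⟨le_trans hc0 ht0c.le, min_le_right _ _⟩
      have ht0d : dist t0 c < δ := by
        rw [Real.dist_eq, abs_of_pos (by linarith)]
        have : t0 ≤ c + δ / 2 := min_le_left _ _
        linarith
      have hyt0 : y t0 ≤ -0.9 := (hδ' ht0d).le
      have : t0 ≤ c := le_csSup hAbdd ⟨ht0I, hyt0⟩
      linarith
    intro t ht
    calc y t ≤ y c := hmono ht (hceq ▸ hcI) (hceq ▸ ht.2)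
      _ ≤ -0.9 := hyc
  -- refined upper bound
  have hup : ∀ t ∈ Set.Icc (0:ℝ) 0.2, y t ≤ -0.942 := by
    intro t ht
    have := key t ht (fun u hu => hup9 u (Set.Icc_subset_Icc le_rfl ht.2 hu))
    nlinarith [ht.2]
  -- final interval arithmetic
  intro x hx
  have hxs : x ∈ s := hsub hx
  rw [Eit x hxs, hd4 x, hd3 x, hd2 x, hd1 x]
  have ha1 : -1 ≤ y x := hlow x hx
  have ha2 : y x ≤ -0.942 := hup x hx
  have hx0 : 0 ≤ x := hx.1
  have hx2 : x ≤ 0.2 := hx.2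
  set a := y x with haa
  set p := x ^ 2 + a ^ 2 / 4 with hp
  set q := 2 * x + a * p / 2 with hq
  set r := 2 + (p ^ 2 + a * q) / 2 with hr
  clear_value a p q r
  have ha2' : a ≤ -0.942 := ha2
  have ha1' : -1 ≤ a := ha1
  have hpl : 0.2218 ≤ p := by rw [hp]; nlinarith
  have hpu : p ≤ 0.29 := by rw [hp]; nlinarith
  have hp0 : 0 ≤ p := by linarith
  have hql : -0.145 ≤ q := by
    rw [hq]; nlinarith [mul_nonneg (by linarith : (0:ℝ) ≤ a + 1) hp0]
  have hqu : q ≤ 0.2956 := by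
    rw [hq]
    nlinarith [mul_nonneg (by linarith : (0:ℝ) ≤ -0.942 - a) (by linarith : (0:ℝ) ≤ p - 0.2218)]
  have hrl : 1.8768 ≤ r := by
    rw [hr]
    nlinarith [mul_nonneg (by linarith : (0:ℝ) ≤ a + 1) (by linarith : (0:ℝ) ≤ 0.2956 - q),
      mul_nonneg (by linarith : (0:ℝ) ≤ p - 0.2218) (by linarith : (0:ℝ) ≤ p + 0.2218)]
  have hru : r ≤ 2.1146 := by
    rw [hr]
    nlinarith [mul_nonneg (by linarith : (0:ℝ) ≤ -0.942 - a) (by linarith : (0:ℝ) ≤ q + 0.145),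
      mul_nonneg (by linarith : (0:ℝ) ≤ 0.29 - p) hp0]
  constructor
  · nlinarith [mul_nonneg (by linarith : (0:ℝ) ≤ 0.29 - p) (by linarith : (0:ℝ) ≤ q + 0.145),
      mul_nonneg (by linarith : (0:ℝ) ≤ a + 1) (by linarith : (0:ℝ) ≤ 2.1146 - r)]
  · nlinarith [mul_nonneg (by linarith : (0:ℝ) ≤ 0.29 - p) (by linarith : (0:ℝ) ≤ 0.2956 - q),
      mul_nonneg (by linarith : (0:ℝ) ≤ -0.942 - a) (by linarith : (0:ℝ) ≤ r - 1.8768)]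
end

section
/- Let y : ℝ → ℝ be infinitely differentiable on an open interval containing [0, 0.2], satisfying y(0) = −1 and y'(x) = x² + y(x)²/4 there. Then for every x in [0, 0.2], 1.17 ≤ y⁽⁵⁾(x) ≤ 1.93. -/
open Set Filter
set_option maxHeartbeats 2000000

noncomputable def F1 (y : ℝ → ℝ) (x : ℝ) : ℝ := x ^ 2 + (y x) ^ 2 / 4
noncomputable def F2 (y : ℝ → ℝ) (x : ℝ) : ℝ := 2 * x + y x * F1 y x / 2
noncomputable def F3 (y : ℝ → ℝ) (x : ℝ) : ℝ := 2 + ((F1 y x) ^ 2 + y x * F2 y x) / 2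
noncomputable def F4 (y : ℝ → ℝ) (x : ℝ) : ℝ := (3 * F1 y x * F2 y x + y x * F3 y x) / 2
noncomputable def F5 (y : ℝ → ℝ) (x : ℝ) : ℝ :=
  (3 * (F2 y x) ^ 2 + 4 * F1 y x * F3 y x + y x * F4 y x) / 2

lemma hasDerivAt_F1 {y : ℝ → ℝ} {z : ℝ} (hy : HasDerivAt y (F1 y z) z) :
    HasDerivAt (F1 y) (F2 y z) z := by
  have h := (hasDerivAt_pow 2 z).add ((hy.pow 2).div_const 4)
  refine h.congr_deriv ?_
  simp [F1, F2]
  ring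

lemma hasDerivAt_F2 {y : ℝ → ℝ} {z : ℝ} (hy : HasDerivAt y (F1 y z) z)
    (h1 : HasDerivAt (F1 y) (F2 y z) z) : HasDerivAt (F2 y) (F3 y z) z := by
  have h := ((hasDerivAt_id z).const_mul 2).add ((hy.mul h1).div_const 2)
  refine h.congr_deriv ?_
  simp [F3]
  ring

lemma hasDerivAt_F3 {y : ℝ → ℝ} {z : ℝ} (hy : HasDerivAt y (F1 y z) z)
    (h1 : HasDerivAt (F1 y) (F2 y z) z) (h2 : HasDerivAt (F2 y) (F3 y z) z) :
    HasDerivAt (F3 y) (F4 y z) z := by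
  have h := (((h1.pow 2).add (hy.mul h2)).div_const 2).const_add 2
  refine h.congr_deriv ?_
  simp [F4]
  ring

lemma hasDerivAt_F4 {y : ℝ → ℝ} {z : ℝ} (hy : HasDerivAt y (F1 y z) z)
    (h1 : HasDerivAt (F1 y) (F2 y z) z) (h2 : HasDerivAt (F2 y) (F3 y z) z)
    (h3 : HasDerivAt (F3 y) (F4 y z) z) : HasDerivAt (F4 y) (F5 y z) z := by
  have h := (((h1.const_mul 3).mul h2).add (hy.mul h3)).div_const 2
  refine h.congr_deriv ?_
  simp [F5]
  ring

/-- If `y` is infinitely differentiable on an open interval containing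
`[0, 0.2]`, with `y 0 = -1` and `y' x = x² + y(x)²/4` there, then
`1.17 ≤ y⁽5⁾ x ≤ 1.93` for all `x ∈ [0, 0.2]`. -/
theorem riccati_deriv5_bounds (y : ℝ → ℝ) (s : Set ℝ) (hs : IsOpen s)
    (hsub : Set.Icc (0 : ℝ) 0.2 ⊆ s) (hsmooth : ContDiffOn ℝ (⊤ : ℕ∞) y s)
    (h0 : y 0 = -1)
    (hde : ∀ x ∈ s, HasDerivAt y (x ^ 2 + (y x) ^ 2 / 4) x) :
    ∀ x ∈ Set.Icc (0 : ℝ) 0.2,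
      1.17 ≤ iteratedDeriv 5 y x ∧ iteratedDeriv 5 y x ≤ 1.93 := by
  have hcont : ContinuousOn y s := hsmooth.continuousOn
  have hde' : ∀ z ∈ s, HasDerivAt y (F1 y z) z := fun z hz => hde z hz
  -- lower bound on y
  have hlow : ∀ t ∈ Set.Icc (0:ℝ) 0.2, -1 ≤ y t := by
    intro t ht
    rcases eq_or_lt_of_le ht.1 with h | hpos
    · rw [← h, h0]
    · have hsubt : Set.Icc (0:ℝ) t ⊆ s := fun z hz => hsub ⟨hz.1, hz.2.trans ht.2⟩
      obtain ⟨ξ, hξ, hslope⟩ := exists_hasDerivAt_eq_slope y (fun z => z ^ 2 + (y z) ^ 2 / 4)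
        hpos (hcont.mono hsubt) (fun z hz => hde z (hsubt ⟨hz.1.le, hz.2.le⟩))
      have h2 : y t - y 0 = (ξ ^ 2 + (y ξ) ^ 2 / 4) * (t - 0) := by
        rw [hslope]; field_simp
      rw [h0] at h2
      nlinarith [sq_nonneg ξ, sq_nonneg (y ξ), hpos]
  -- upper bound on y
  have hup : ∀ t ∈ Set.Icc (0:ℝ) 0.2, y t ≤ -0.94 := by
    by_contra hcon
    push_neg at hcon
    obtain ⟨t₀, ht₀, hgt⟩ := hcon
    set K := {t | t ∈ Set.Icc (0:ℝ) 0.2 ∧ -0.94 ≤ y t} with hKdef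
    have hKne : K.Nonempty := ⟨t₀, ht₀, hgt.le⟩
    have hKbdd : BddBelow K := ⟨0, fun t ht => ht.1.1⟩
    have hKcl : IsClosed K := by
      refine isClosed_of_closure_subset ?_
      intro t ht
      have htI : t ∈ Set.Icc (0:ℝ) 0.2 := by
        have h1 : closure K ⊆ closure (Set.Icc (0:ℝ) 0.2) :=
          closure_mono (fun z hz => hz.1)
        have := h1 ht
        rwa [isClosed_Icc.closure_eq] at this
      refine ⟨htI, ?_⟩
      by_contra h
      push_neg at h
      have hct : ContinuousAt y t := hcont.continuousAt (hs.mem_nhds (hsub htI))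
      have hev : y ⁻¹' (Set.Iio (-0.94)) ∈ nhds t := hct (Iio_mem_nhds h)
      rw [mem_closure_iff_nhds] at ht
      obtain ⟨z, hz1, hz2⟩ := ht _ hev
      exact absurd hz2.2 (by simpa using hz1)
    set c := sInf K with hcdef
    have hcK : c ∈ K := hKcl.csInf_mem hKne hKbdd
    have hc0 : 0 < c := by
      rcases lt_or_eq_of_le hcK.1.1 with h | h
      · exact h
      · exfalso; have := hcK.2; rw [← h, h0] at this; norm_num at this
    have hc2 : c ≤ 0.2 := hcK.1.2
    have hsubc : Set.Icc (0:ℝ) c ⊆ s := fun z hz => hsub ⟨hz.1, hz.2.trans hc2⟩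
    obtain ⟨ξ, hξ, hslope⟩ := exists_hasDerivAt_eq_slope y (fun z => z ^ 2 + (y z) ^ 2 / 4)
      hc0 (hcont.mono hsubc) (fun z hz => hde z (hsubc ⟨hz.1.le, hz.2.le⟩))
    have hξI : ξ ∈ Set.Icc (0:ℝ) 0.2 := ⟨hξ.1.le, hξ.2.le.trans hc2⟩
    have hξlow : -1 ≤ y ξ := hlow ξ hξI
    have hξup : y ξ < -0.94 := by
      have hnK : ξ ∉ K := notMem_of_lt_csInf hξ.2 hKbdd
      by_contra h
      push_neg at h
      exact hnK ⟨hξI, h⟩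
    have h2 : y c - y 0 = (ξ ^ 2 + (y ξ) ^ 2 / 4) * (c - 0) := by
      rw [hslope, div_mul_cancel₀ _ (sub_ne_zero.mpr hc0.ne')]
    rw [h0] at h2
    have hyc : -0.94 ≤ y c := hcK.2
    have hsq : (y ξ) ^ 2 ≤ 1 := by nlinarith
    have hξsq : ξ ^ 2 ≤ 0.04 := by nlinarith [hξ.1.le, hξ.2.le, hc2]
    nlinarith [hc0.le, hc2]
  -- iterated derivative identities on s
  have hd1 : ∀ z ∈ s, HasDerivAt (F1 y) (F2 y z) z := fun z hz => hasDerivAt_F1 (hde' z hz)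
  have hd2 : ∀ z ∈ s, HasDerivAt (F2 y) (F3 y z) z :=
    fun z hz => hasDerivAt_F2 (hde' z hz) (hd1 z hz)
  have hd3 : ∀ z ∈ s, HasDerivAt (F3 y) (F4 y z) z :=
    fun z hz => hasDerivAt_F3 (hde' z hz) (hd1 z hz) (hd2 z hz)
  have hd4 : ∀ z ∈ s, HasDerivAt (F4 y) (F5 y z) z :=
    fun z hz => hasDerivAt_F4 (hde' z hz) (hd1 z hz) (hd2 z hz) (hd3 z hz)
  have e1 : ∀ z ∈ s, iteratedDeriv 1 y z = F1 y z := by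
    intro z hz
    rw [iteratedDeriv_one]
    exact (hde' z hz).deriv
  have e2 : ∀ z ∈ s, iteratedDeriv 2 y z = F2 y z := by
    intro z hz
    have hev : iteratedDeriv 1 y =ᶠ[nhds z] F1 y :=
      Filter.eventuallyEq_of_mem (hs.mem_nhds hz) (fun w hw => e1 w hw)
    rw [show (2:ℕ) = 1 + 1 from rfl, iteratedDeriv_succ, hev.deriv_eq]
    exact (hd1 z hz).deriv
  have e3 : ∀ z ∈ s, iteratedDeriv 3 y z = F3 y z := by
    intro z hz
    have hev : iteratedDeriv 2 y =ᶠ[nhds z] F2 y :=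
      Filter.eventuallyEq_of_mem (hs.mem_nhds hz) (fun w hw => e2 w hw)
    rw [show (3:ℕ) = 2 + 1 from rfl, iteratedDeriv_succ, hev.deriv_eq]
    exact (hd2 z hz).deriv
  have e4 : ∀ z ∈ s, iteratedDeriv 4 y z = F4 y z := by
    intro z hz
    have hev : iteratedDeriv 3 y =ᶠ[nhds z] F3 y :=
      Filter.eventuallyEq_of_mem (hs.mem_nhds hz) (fun w hw => e3 w hw)
    rw [show (4:ℕ) = 3 + 1 from rfl, iteratedDeriv_succ, hev.deriv_eq]
    exact (hd3 z hz).deriv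
  have e5 : ∀ z ∈ s, iteratedDeriv 5 y z = F5 y z := by
    intro z hz
    have hev : iteratedDeriv 4 y =ᶠ[nhds z] F4 y :=
      Filter.eventuallyEq_of_mem (hs.mem_nhds hz) (fun w hw => e4 w hw)
    rw [show (5:ℕ) = 4 + 1 from rfl, iteratedDeriv_succ, hev.deriv_eq]
    exact (hd4 z hz).deriv
  -- final interval bounds
  intro x hx
  rw [e5 x (hsub hx)]
  obtain ⟨hx0, hx2⟩ := hx
  have hu1 : -1 ≤ y x := hlow x ⟨hx0, hx2⟩
  have hu2 : y x ≤ -0.94 := hup x ⟨hx0, hx2⟩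
  have hAd : F1 y x = x ^ 2 + (y x) ^ 2 / 4 := rfl
  have hBd : F2 y x = 2 * x + y x * F1 y x / 2 := rfl
  have hCd : F3 y x = 2 + ((F1 y x) ^ 2 + y x * F2 y x) / 2 := rfl
  have hDd : F4 y x = (3 * F1 y x * F2 y x + y x * F3 y x) / 2 := rfl
  have hEd : F5 y x = (3 * (F2 y x) ^ 2 + 4 * F1 y x * F3 y x + y x * F4 y x) / 2 := rfl
  have hxsq : x ^ 2 ≤ 0.04 := by nlinarith
  have hA1 : (0.2209:ℝ) ≤ F1 y x := by
    rw [hAd]; nlinarith [sq_nonneg x, sq_nonneg (y x + 0.94)]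
  have hA2 : F1 y x ≤ 0.29 := by
    rw [hAd]
    nlinarith [mul_nonneg (by linarith : (0:ℝ) ≤ 1 - y x) (by linarith : (0:ℝ) ≤ 1 + y x)]
  have hB1 : (-0.145:ℝ) ≤ F2 y x := by
    rw [hBd]
    nlinarith [mul_nonneg (by linarith : (0:ℝ) ≤ y x + 1) (by linarith : (0:ℝ) ≤ F1 y x)]
  have hB2 : F2 y x ≤ 0.2962 := by
    rw [hBd]
    nlinarith [mul_nonneg (by linarith : (0:ℝ) ≤ -y x - 0.94) (by linarith : (0:ℝ) ≤ F1 y x)]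
  have hC1 : (1.876:ℝ) ≤ F3 y x := by
    rw [hCd]
    nlinarith [sq_nonneg (F1 y x - 0.2209),
      mul_nonneg (by linarith : (0:ℝ) ≤ -y x) (by linarith : (0:ℝ) ≤ 0.2962 - F2 y x)]
  have hC2 : F3 y x ≤ 2.1146 := by
    rw [hCd]
    nlinarith [mul_nonneg (by linarith : (0:ℝ) ≤ 0.29 - F1 y x) (by linarith : (0:ℝ) ≤ F1 y x),
      mul_nonneg (by linarith : (0:ℝ) ≤ -y x) (by linarith : (0:ℝ) ≤ F2 y x + 0.145)]
  have hD1 : (-1.1204:ℝ) ≤ F4 y x := by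
    rw [hDd]
    nlinarith [mul_nonneg (by linarith : (0:ℝ) ≤ F1 y x) (by linarith : (0:ℝ) ≤ F2 y x + 0.145),
      mul_nonneg (by linarith : (0:ℝ) ≤ -y x) (by linarith : (0:ℝ) ≤ 2.1146 - F3 y x)]
  have hD2 : F4 y x ≤ -0.7528 := by
    rw [hDd]
    nlinarith [mul_nonneg (by linarith : (0:ℝ) ≤ F1 y x) (by linarith : (0:ℝ) ≤ 0.2962 - F2 y x),
      mul_nonneg (by linarith : (0:ℝ) ≤ -y x - 0.94) (by linarith : (0:ℝ) ≤ F3 y x)]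
  constructor
  · rw [hEd]
    nlinarith [sq_nonneg (F2 y x),
      mul_nonneg (by linarith : (0:ℝ) ≤ F1 y x - 0.2209) (by linarith : (0:ℝ) ≤ F3 y x),
      mul_nonneg (by linarith : (0:ℝ) ≤ -y x - 0.94) (by linarith : (0:ℝ) ≤ -F4 y x - 0.7528)]
  · rw [hEd]
    nlinarith [mul_nonneg (by linarith : (0:ℝ) ≤ 0.2962 - F2 y x) (by linarith : (0:ℝ) ≤ F2 y x + 0.145),
      mul_nonneg (by linarith : (0:ℝ) ≤ 0.29 - F1 y x) (by linarith : (0:ℝ) ≤ F3 y x),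
      mul_nonneg (by linarith : (0:ℝ) ≤ y x + 1) (by linarith : (0:ℝ) ≤ -F4 y x)]
end

section
/- Let y : ℝ → ℝ be infinitely differentiable on an open interval containing [0, 0.2], satisfying y(0) = −1 and y'(x) = x² + y(x)²/4 there. Then for every x in [0, 0.2], −3.38 ≤ y⁽⁶⁾(x) ≤ 2.23. -/
set_option maxHeartbeats 1000000

private lemma riccati_step {y gk gk1 : ℝ → ℝ} {s : Set ℝ} (hs : IsOpen s) (k : ℕ)
    (hprev : ∀ z ∈ s, iteratedDeriv k y z = gk z)
    (hder : ∀ z ∈ s, HasDerivAt gk (gk1 z) z) :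
    ∀ z ∈ s, iteratedDeriv (k + 1) y z = gk1 z := by
  intro z hz
  rw [iteratedDeriv_succ]
  have heq : iteratedDeriv k y =ᶠ[nhds z] gk :=
    Filter.eventuallyEq_of_mem (hs.mem_nhds hz) hprev
  rw [heq.deriv_eq]
  exact (hder z hz).deriv

/-- If `y` is infinitely differentiable on an open interval containing
`[0, 0.2]`, with `y 0 = -1` and `y' x = x² + y(x)²/4` there, then
`-3.38 ≤ y⁽6⁾ x ≤ 2.23` for all `x ∈ [0, 0.2]`. -/
theorem riccati_deriv6_bounds (y : ℝ → ℝ) (s : Set ℝ) (hs : IsOpen s)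
    (hsub : Set.Icc (0 : ℝ) 0.2 ⊆ s) (hsmooth : ContDiffOn ℝ (⊤ : ℕ∞) y s)
    (h0 : y 0 = -1)
    (hde : ∀ x ∈ s, HasDerivAt y (x ^ 2 + (y x) ^ 2 / 4) x) :
    ∀ x ∈ Set.Icc (0 : ℝ) 0.2,
      -3.38 ≤ iteratedDeriv 6 y x ∧ iteratedDeriv 6 y x ≤ 2.23 := by
  have hd0 : ∀ z ∈ s, HasDerivAt y ((1/4 : ℝ) * (z ^ 0 * y z ^ 2) + (1 : ℝ) * (z ^ 2 * y z ^ 0)) z := by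
    intro z hz
    convert hde z hz using 1
    ring
  have hd1 : ∀ z ∈ s, HasDerivAt (fun t => (1/4 : ℝ) * (t ^ 0 * y t ^ 2) + (1 : ℝ) * (t ^ 2 * y t ^ 0)) ((1/8 : ℝ) * (z ^ 0 * y z ^ 3) + (2 : ℝ) * (z ^ 1 * y z ^ 0) + (1/2 : ℝ) * (z ^ 2 * y z ^ 1)) z := by
    intro z hz
    have H : HasDerivAt y (z ^ 2 + y z ^ 2 / 4) z := hde z hz
    have C := ((((hasDerivAt_pow 0 z).mul (H.pow 2)).const_mul (1/4 : ℝ)).add (((hasDerivAt_pow 2 z).mul (H.pow 0)).const_mul (1 : ℝ)))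
    refine C.congr_deriv ?_
    simp only [Pi.pow_apply]
    ring
  have hd2 : ∀ z ∈ s, HasDerivAt (fun t => (1/8 : ℝ) * (t ^ 0 * y t ^ 3) + (2 : ℝ) * (t ^ 1 * y t ^ 0) + (1/2 : ℝ) * (t ^ 2 * y t ^ 1)) ((2 : ℝ) * (z ^ 0 * y z ^ 0) + (3/32 : ℝ) * (z ^ 0 * y z ^ 4) + (1 : ℝ) * (z ^ 1 * y z ^ 1) + (1/2 : ℝ) * (z ^ 2 * y z ^ 2) + (1/2 : ℝ) * (z ^ 4 * y z ^ 0)) z := by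
    intro z hz
    have H : HasDerivAt y (z ^ 2 + y z ^ 2 / 4) z := hde z hz
    have C := (((((hasDerivAt_pow 0 z).mul (H.pow 3)).const_mul (1/8 : ℝ)).add (((hasDerivAt_pow 1 z).mul (H.pow 0)).const_mul (2 : ℝ))).add (((hasDerivAt_pow 2 z).mul (H.pow 1)).const_mul (1/2 : ℝ)))
    refine C.congr_deriv ?_
    simp only [Pi.pow_apply]
    ring
  have hd3 : ∀ z ∈ s, HasDerivAt (fun t => (2 : ℝ) * (t ^ 0 * y t ^ 0) + (3/32 : ℝ) * (t ^ 0 * y t ^ 4) + (1 : ℝ) * (t ^ 1 * y t ^ 1) + (1/2 : ℝ) * (t ^ 2 * y t ^ 2) + (1/2 : ℝ) * (t ^ 4 * y t ^ 0)) ((1 : ℝ) * (z ^ 0 * y z ^ 1) + (3/32 : ℝ) * (z ^ 0 * y z ^ 5) + (5/4 : ℝ) * (z ^ 1 * y z ^ 2) + (5/8 : ℝ) * (z ^ 2 * y z ^ 3) + (3 : ℝ) * (z ^ 3 * y z ^ 0) + (1 : ℝ) * (z ^ 4 * y z ^ 1)) z := by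
    intro z hz
    have H : HasDerivAt y (z ^ 2 + y z ^ 2 / 4) z := hde z hz
    have C := (((((((hasDerivAt_pow 0 z).mul (H.pow 0)).const_mul (2 : ℝ)).add (((hasDerivAt_pow 0 z).mul (H.pow 4)).const_mul (3/32 : ℝ))).add (((hasDerivAt_pow 1 z).mul (H.pow 1)).const_mul (1 : ℝ))).add (((hasDerivAt_pow 2 z).mul (H.pow 2)).const_mul (1/2 : ℝ))).add (((hasDerivAt_pow 4 z).mul (H.pow 0)).const_mul (1/2 : ℝ)))
    refine C.congr_deriv ?_
    simp only [Pi.pow_apply]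
    ring
  have hd4 : ∀ z ∈ s, HasDerivAt (fun t => (1 : ℝ) * (t ^ 0 * y t ^ 1) + (3/32 : ℝ) * (t ^ 0 * y t ^ 5) + (5/4 : ℝ) * (t ^ 1 * y t ^ 2) + (5/8 : ℝ) * (t ^ 2 * y t ^ 3) + (3 : ℝ) * (t ^ 3 * y t ^ 0) + (1 : ℝ) * (t ^ 4 * y t ^ 1)) ((3/2 : ℝ) * (z ^ 0 * y z ^ 2) + (15/128 : ℝ) * (z ^ 0 * y z ^ 6) + (15/8 : ℝ) * (z ^ 1 * y z ^ 3) + (10 : ℝ) * (z ^ 2 * y z ^ 0) + (15/16 : ℝ) * (z ^ 2 * y z ^ 4) + (13/2 : ℝ) * (z ^ 3 * y z ^ 1) + (17/8 : ℝ) * (z ^ 4 * y z ^ 2) + (1 : ℝ) * (z ^ 6 * y z ^ 0)) z := by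
    intro z hz
    have H : HasDerivAt y (z ^ 2 + y z ^ 2 / 4) z := hde z hz
    have C := ((((((((hasDerivAt_pow 0 z).mul (H.pow 1)).const_mul (1 : ℝ)).add (((hasDerivAt_pow 0 z).mul (H.pow 5)).const_mul (3/32 : ℝ))).add (((hasDerivAt_pow 1 z).mul (H.pow 2)).const_mul (5/4 : ℝ))).add (((hasDerivAt_pow 2 z).mul (H.pow 3)).const_mul (5/8 : ℝ))).add (((hasDerivAt_pow 3 z).mul (H.pow 0)).const_mul (3 : ℝ))).add (((hasDerivAt_pow 4 z).mul (H.pow 1)).const_mul (1 : ℝ)))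
    refine C.congr_deriv ?_
    simp only [Pi.pow_apply]
    ring
  have hd5 : ∀ z ∈ s, HasDerivAt (fun t => (3/2 : ℝ) * (t ^ 0 * y t ^ 2) + (15/128 : ℝ) * (t ^ 0 * y t ^ 6) + (15/8 : ℝ) * (t ^ 1 * y t ^ 3) + (10 : ℝ) * (t ^ 2 * y t ^ 0) + (15/16 : ℝ) * (t ^ 2 * y t ^ 4) + (13/2 : ℝ) * (t ^ 3 * y t ^ 1) + (17/8 : ℝ) * (t ^ 4 * y t ^ 2) + (1 : ℝ) * (t ^ 6 * y t ^ 0)) ((21/8 : ℝ) * (z ^ 0 * y z ^ 3) + (45/256 : ℝ) * (z ^ 0 * y z ^ 7) + (20 : ℝ) * (z ^ 1 * y z ^ 0) + (105/32 : ℝ) * (z ^ 1 * y z ^ 4) + (45/2 : ℝ) * (z ^ 2 * y z ^ 1) + (105/64 : ℝ) * (z ^ 2 * y z ^ 5) + (63/4 : ℝ) * (z ^ 3 * y z ^ 2) + (77/16 : ℝ) * (z ^ 4 * y z ^ 3) + (25/2 : ℝ) * (z ^ 5 * y z ^ 0) + (17/4 : ℝ) * (z ^ 6 * y z ^ 1))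 z := by
    intro z hz
    have H : HasDerivAt y (z ^ 2 + y z ^ 2 / 4) z := hde z hz
    have C := ((((((((((hasDerivAt_pow 0 z).mul (H.pow 2)).const_mul (3/2 : ℝ)).add (((hasDerivAt_pow 0 z).mul (H.pow 6)).const_mul (15/128 : ℝ))).add (((hasDerivAt_pow 1 z).mul (H.pow 3)).const_mul (15/8 : ℝ))).add (((hasDerivAt_pow 2 z).mul (H.pow 0)).const_mul (10 : ℝ))).add (((hasDerivAt_pow 2 z).mul (H.pow 4)).const_mul (15/16 : ℝ))).add (((hasDerivAt_pow 3 z).mul (H.pow 1)).const_mul (13/2 : ℝ))).add (((hasDerivAt_pow 4 z).mul (H.pow 2)).const_mul (17/8 : ℝ))).add (((hasDerivAt_pow 6 z).mul (H.pow 0)).const_mul (1 : ℝ)))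
    refine C.congr_deriv ?_
    simp only [Pi.pow_apply]
    ring
  have i0 : ∀ z ∈ s, iteratedDeriv 0 y z = y z := by
    intro z hz; simp
  have i1 := riccati_step hs 0 i0 hd0
  have i2 := riccati_step hs 1 i1 hd1
  have i3 := riccati_step hs 2 i2 hd2
  have i4 := riccati_step hs 3 i3 hd3
  have i5 := riccati_step hs 4 i4 hd4
  have i6 := riccati_step hs 5 i5 hd5
  -- bounds on y
  have hcont : ContinuousOn y (Set.Icc (0:ℝ) 0.2) := hsmooth.continuousOn.mono hsub
  have hmono : MonotoneOn y (Set.Icc (0:ℝ) 0.2) := by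
    apply monotoneOn_of_deriv_nonneg (convex_Icc _ _) hcont
    · intro t ht
      exact ((hde t (hsub (interior_subset ht))).differentiableAt).differentiableWithinAt
    · intro t ht
      rw [(hde t (hsub (interior_subset ht))).deriv]
      positivity
  have hlow : ∀ z ∈ Set.Icc (0:ℝ) 0.2, -1 ≤ y z := by
    intro z hz
    have := hmono (Set.left_mem_Icc.2 (by norm_num)) hz hz.1
    linarith [this, h0.le, h0.ge]
  -- key comparison : if y < 0 on [0,b) then y b ≤ 0.29 b - 1
  have key : ∀ b ∈ Set.Icc (0:ℝ) 0.2, (∀ t ∈ Set.Ico (0:ℝ) b, y t < 0) →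
      y b ≤ 0.29 * b - 1 := by
    intro b hb hneg
    have hIcc : Set.Icc (0:ℝ) b ⊆ Set.Icc (0:ℝ) 0.2 := Set.Icc_subset_Icc le_rfl hb.2
    have hgmono : MonotoneOn (fun t => 0.29 * t - y t) (Set.Icc (0:ℝ) b) := by
      apply monotoneOn_of_deriv_nonneg (convex_Icc _ _)
      · exact (continuousOn_const.mul continuousOn_id).sub (hcont.mono hIcc)
      · intro t ht
        have hts : t ∈ s := hsub (hIcc (interior_subset ht))
        exact (((hasDerivAt_id t).const_mul (0.29:ℝ)).sub (hde t hts)).differentiableAt.differentiableWithinAt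
      · intro t ht
        rw [interior_Icc] at ht
        have hts : t ∈ s := hsub (hIcc ⟨ht.1.le, ht.2.le⟩)
        have hD : HasDerivAt (fun t => 0.29 * t - y t) (0.29 * 1 - (t ^ 2 + y t ^ 2 / 4)) t :=
          ((hasDerivAt_id t).const_mul (0.29:ℝ)).sub (hde t hts)
        rw [hD.deriv]
        have h1 : -1 ≤ y t := hlow t (hIcc ⟨ht.1.le, ht.2.le⟩)
        have h2 : y t < 0 := hneg t ⟨ht.1.le, ht.2⟩
        have h3 : t ≤ 0.2 := le_trans ht.2.le hb.2
        have h4 : 0 ≤ t := ht.1.le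
        nlinarith
    have := hgmono (Set.left_mem_Icc.2 hb.1) (Set.right_mem_Icc.2 hb.1) hb.1
    simp only at this
    rw [h0] at this
    linarith
  have hneg : ∀ z ∈ Set.Icc (0:ℝ) 0.2, y z < 0 := by
    by_contra hcon
    push_neg at hcon
    obtain ⟨z0, hz0, hz0y⟩ := hcon
    have hTclosed : IsClosed (Set.Icc (0:ℝ) 0.2 ∩ y ⁻¹' Set.Ici 0) :=
      hcont.preimage_isClosed_of_isClosed isClosed_Icc isClosed_Ici
    have hTne : (Set.Icc (0:ℝ) 0.2 ∩ y ⁻¹' Set.Ici 0).Nonempty := ⟨z0, hz0, hz0y⟩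
    have hTbdd : BddBelow (Set.Icc (0:ℝ) 0.2 ∩ y ⁻¹' Set.Ici 0) :=
      ⟨0, fun t ht => ht.1.1⟩
    have hcT := hTclosed.csInf_mem hTne hTbdd
    set c := sInf (Set.Icc (0:ℝ) 0.2 ∩ y ⁻¹' Set.Ici 0) with hc
    have hcIcc : c ∈ Set.Icc (0:ℝ) 0.2 := hcT.1
    have hcy : (0:ℝ) ≤ y c := hcT.2
    have hsmall : ∀ t ∈ Set.Ico (0:ℝ) c, y t < 0 := by
      intro t ht
      by_contra h
      push_neg at h
      have htT : t ∈ Set.Icc (0:ℝ) 0.2 ∩ y ⁻¹' Set.Ici 0 :=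
        ⟨⟨ht.1, ht.2.le.trans hcIcc.2⟩, h⟩
      exact absurd (csInf_le hTbdd htT) (not_le.mpr ht.2)
    have := key c hcIcc hsmall
    have hc2 : c ≤ 0.2 := hcIcc.2
    linarith
  have hup : ∀ z ∈ Set.Icc (0:ℝ) 0.2, y z ≤ 0.29 * z - 1 := by
    intro z hz
    exact key z hz (fun t ht => hneg t ⟨ht.1, ht.2.le.trans hz.2⟩)
  -- final polynomial bounds
  intro x hx
  rw [i6 x (hsub hx)]
  have hx0 : (0:ℝ) ≤ x := hx.1
  have hx2 : x ≤ 0.2 := hx.2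
  have hv1 : -1 ≤ y x := hlow x hx
  have hv2 : y x ≤ 0.29 * x - 1 := hup x hx
  set v := y x with hv
  have hv0 : v ≤ 0 := by nlinarith
  have h1v : 0 ≤ 1 + v := by linarith
  have h3 : v ^ 3 ≤ 0 := Odd.pow_nonpos (by decide) hv0
  have h5 : v ^ 5 ≤ 0 := Odd.pow_nonpos (by decide) hv0
  have e2 : x ^ 2 ≤ 0.2 * x := by nlinarith
  have e4 : x ^ 4 ≤ 0.008 * x := by nlinarith [sq_nonneg x, e2, mul_nonneg hx0 hx0]
  constructor
  · have hv3 : -1 ≤ v ^ 3 := by nlinarith [sq_nonneg v, sq_nonneg (1 + v)]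
    have hfac7 : 0 ≤ 1 - v + v ^ 2 - v ^ 3 + v ^ 4 - v ^ 5 + v ^ 6 := by
      nlinarith [sq_nonneg v, sq_nonneg (v ^ 2), sq_nonneg (v ^ 3), h3, h5]
    have hv7 : -1 ≤ v ^ 7 := by nlinarith [mul_nonneg h1v hfac7]
    have hfac5 : 0 ≤ 1 - v + v ^ 2 - v ^ 3 + v ^ 4 := by
      nlinarith [sq_nonneg v, sq_nonneg (v ^ 2), h3]
    have hv5 : -1 ≤ v ^ 5 := by nlinarith [mul_nonneg h1v hfac5]
    have e6 : x ^ 6 ≤ 0.00032 * x := by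
      nlinarith [e4, e2, mul_nonneg (mul_nonneg hx0 hx0) hx0, sq_nonneg (x ^ 2)]
    have t1 : -(x ^ 2) ≤ x ^ 2 * v := by nlinarith [mul_nonneg (sq_nonneg x) h1v]
    have t2 : -(x ^ 2) ≤ x ^ 2 * v ^ 5 := by
      nlinarith [mul_nonneg (sq_nonneg x) (by linarith : (0:ℝ) ≤ 1 + v ^ 5)]
    have t3 : -(x ^ 4) ≤ x ^ 4 * v ^ 3 := by
      nlinarith [mul_nonneg (by positivity : (0:ℝ) ≤ x ^ 4) (by linarith : (0:ℝ) ≤ 1 + v ^ 3)]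
    have t4 : -(x ^ 6) ≤ x ^ 6 * v := by
      nlinarith [mul_nonneg (by positivity : (0:ℝ) ≤ x ^ 6) h1v]
    have n1 : 0 ≤ x * v ^ 4 := mul_nonneg hx0 (by positivity)
    have n2 : 0 ≤ x ^ 3 * v ^ 2 := mul_nonneg (by positivity) (sq_nonneg v)
    have n3 : (0:ℝ) ≤ x ^ 5 := by positivity
    nlinarith [t1, t2, t3, t4, e2, e4, e6, n1, n2, n3, hv3, hv7, hx0]
  · have hnv : (0.942:ℝ) ≤ -v := by linarith
    have hp7 : (0.942:ℝ) ^ 7 ≤ (-v) ^ 7 := pow_le_pow_left₀ (by norm_num) hnv 7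
    have hneg7 : (-v) ^ 7 = -(v ^ 7) := Odd.neg_pow (by decide) v
    have c7 : v ^ 7 ≤ -0.65 := by rw [hneg7] at hp7; nlinarith [hp7]
    have c3 : v ^ 3 ≤ (0.29 * x - 1) ^ 3 := by
      nlinarith [mul_nonneg (sub_nonneg.2 hv2)
        (by nlinarith [sq_nonneg (v + (0.29 * x - 1)), sq_nonneg v, sq_nonneg (0.29 * x - 1)] :
          (0:ℝ) ≤ v ^ 2 + v * (0.29 * x - 1) + (0.29 * x - 1) ^ 2)]
    have c2 : v ^ 2 ≤ 1 := by nlinarith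
    have c4 : v ^ 4 ≤ 1 := by nlinarith [sq_nonneg v, c2]
    have t2 : x ^ 2 * v ^ 5 ≤ 0 := mul_nonpos_of_nonneg_of_nonpos (sq_nonneg x) h5
    have t3 : x ^ 4 * v ^ 3 ≤ 0 := mul_nonpos_of_nonneg_of_nonpos (by positivity) h3
    have t4 : x ^ 6 * v ≤ 0 := mul_nonpos_of_nonneg_of_nonpos (by positivity) hv0
    have t1 : x ^ 2 * v ≤ x ^ 2 * (0.29 * x - 1) := by
      nlinarith [mul_nonneg (sq_nonneg x) (sub_nonneg.2 hv2)]
    have u1 : x * v ^ 4 ≤ x := by nlinarith [mul_nonneg hx0 (sub_nonneg.2 c4)]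
    have u2 : x ^ 3 * v ^ 2 ≤ x ^ 3 := by
      nlinarith [mul_nonneg (by positivity : (0:ℝ) ≤ x ^ 3) (sub_nonneg.2 c2)]
    have u3 : x ^ 3 ≤ 0.04 * x := by nlinarith [e2, mul_nonneg hx0 hx0]
    have u4 : x ^ 5 ≤ 0.0016 * x := by nlinarith [e4, mul_nonneg hx0 hx0, e2]
    nlinarith [c3, c7, t1, t2, t3, t4, u1, u2, u3, u4, e2, hx0,
      mul_nonneg hx0 hx0, mul_nonneg (mul_nonneg hx0 hx0) hx0]
end

section
/- Let y : ℝ → ℝ be infinitely differentiable on an open interval containing [0, 0.2], satisfying y(0) = −1 and y'(x) = x² + y(x)²/4 there. Then for every x in [0, 0.2], 14.59 ≤ y⁽⁷⁾(x) ≤ 27.12. -/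
private noncomputable def D1 (y : ℝ → ℝ) (t : ℝ) : ℝ := t ^ 2 + y t ^ 2 / 4
private noncomputable def D2 (y : ℝ → ℝ) (t : ℝ) : ℝ := 2 * t + y t * D1 y t / 2
private noncomputable def D3 (y : ℝ → ℝ) (t : ℝ) : ℝ := 2 + (D1 y t ^ 2 + y t * D2 y t) / 2
private noncomputable def D4 (y : ℝ → ℝ) (t : ℝ) : ℝ := y t * D3 y t / 2 + 3 / 2 * (D1 y t * D2 y t)
private noncomputable def D5 (y : ℝ → ℝ) (t : ℝ) : ℝ :=
  y t * D4 y t / 2 + 2 * (D1 y t * D3 y t) + 3 / 2 * D2 y t ^ 2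
private noncomputable def D6 (y : ℝ → ℝ) (t : ℝ) : ℝ :=
  y t * D5 y t / 2 + 5 / 2 * (D1 y t * D4 y t) + 5 * (D2 y t * D3 y t)
private noncomputable def D7 (y : ℝ → ℝ) (t : ℝ) : ℝ :=
  y t * D6 y t / 2 + 3 * (D1 y t * D5 y t) + 15 / 2 * (D2 y t * D4 y t) + 5 * D3 y t ^ 2

private lemma hasDerivAt_congr_deriv {f : ℝ → ℝ} {a b t : ℝ}
    (h : HasDerivAt f a t) (e : a = b) : HasDerivAt f b t := e ▸ h

private lemma R1 (x Y : ℝ) (hx0 : 0 ≤ x) (hx2 : x ≤ 0.2) (hY1 : -1 ≤ Y) (hY2 : Y ≤ -0.94) :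
    0.2209 ≤ x ^ 2 + Y ^ 2 / 4 ∧ x ^ 2 + Y ^ 2 / 4 ≤ 0.29 := by
  constructor
  · nlinarith [sq_nonneg x, mul_nonneg (by linarith : (0:ℝ) ≤ -0.94 - Y) (by linarith : (0:ℝ) ≤ -0.94 - Y)]
  · nlinarith [mul_nonneg (by linarith : (0:ℝ) ≤ Y + 1) (by linarith : (0:ℝ) ≤ Y + 1)]

private lemma R2 (x Y a1 : ℝ) (hx0 : 0 ≤ x) (hx2 : x ≤ 0.2) (hY1 : -1 ≤ Y) (hY2 : Y ≤ -0.94)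
    (h1a : 0.2209 ≤ a1) (h1b : a1 ≤ 0.29) :
    -0.145 ≤ 2 * x + Y * a1 / 2 ∧ 2 * x + Y * a1 / 2 ≤ 0.2962 := by
  constructor
  · nlinarith [mul_nonneg (by linarith : (0:ℝ) ≤ Y + 1) (by linarith : (0:ℝ) ≤ a1)]
  · nlinarith [mul_nonneg (by linarith : (0:ℝ) ≤ -0.94 - Y) (by linarith : (0:ℝ) ≤ a1 - 0.2209)]

private lemma R3 (Y a1 a2 : ℝ) (hY1 : -1 ≤ Y) (hY2 : Y ≤ -0.94)
    (h1a : 0.2209 ≤ a1) (h1b : a1 ≤ 0.29) (h2a : -0.145 ≤ a2) (h2b : a2 ≤ 0.2962) :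
    1.876 ≤ 2 + (a1 ^ 2 + Y * a2) / 2 ∧ 2 + (a1 ^ 2 + Y * a2) / 2 ≤ 2.115 := by
  constructor
  · nlinarith [mul_nonneg (by linarith : (0:ℝ) ≤ Y + 1) (by linarith : (0:ℝ) ≤ 0.2962 - a2),
      sq_nonneg (a1 - 0.2209)]
  · nlinarith [mul_nonneg (by linarith : (0:ℝ) ≤ -0.94 - Y) (by linarith : (0:ℝ) ≤ a2 + 0.145),
      sq_nonneg (0.29 - a1)]

private lemma R4 (Y a1 a2 a3 : ℝ) (hY1 : -1 ≤ Y) (hY2 : Y ≤ -0.94)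
    (h1a : 0.2209 ≤ a1) (h1b : a1 ≤ 0.29) (h2a : -0.145 ≤ a2) (h2b : a2 ≤ 0.2962)
    (h3a : 1.876 ≤ a3) (h3b : a3 ≤ 2.115) :
    -1.121 ≤ Y * a3 / 2 + 3 / 2 * (a1 * a2) ∧ Y * a3 / 2 + 3 / 2 * (a1 * a2) ≤ -0.7528 := by
  constructor
  · nlinarith [mul_nonneg (by linarith : (0:ℝ) ≤ Y + 1) (by linarith : (0:ℝ) ≤ 2.115 - a3),
      mul_nonneg (by linarith : (0:ℝ) ≤ 0.29 - a1) (by linarith : (0:ℝ) ≤ a2 + 0.145)]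
  · nlinarith [mul_nonneg (by linarith : (0:ℝ) ≤ -0.94 - Y) (by linarith : (0:ℝ) ≤ a3 - 1.876),
      mul_nonneg (by linarith : (0:ℝ) ≤ 0.29 - a1) (by linarith : (0:ℝ) ≤ 0.2962 - a2)]

private lemma R5 (Y a1 a2 a3 a4 : ℝ) (hY1 : -1 ≤ Y) (hY2 : Y ≤ -0.94)
    (h1a : 0.2209 ≤ a1) (h1b : a1 ≤ 0.29) (h2a : -0.145 ≤ a2) (h2b : a2 ≤ 0.2962)
    (h3a : 1.876 ≤ a3) (h3b : a3 ≤ 2.115) (h4a : -1.121 ≤ a4) (h4b : a4 ≤ -0.7528) :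
    1.182 ≤ Y * a4 / 2 + 2 * (a1 * a3) + 3 / 2 * a2 ^ 2 ∧
      Y * a4 / 2 + 2 * (a1 * a3) + 3 / 2 * a2 ^ 2 ≤ 1.919 := by
  constructor
  · nlinarith [mul_nonneg (by linarith : (0:ℝ) ≤ -0.94 - Y) (by linarith : (0:ℝ) ≤ -0.7528 - a4),
      mul_nonneg (by linarith : (0:ℝ) ≤ a1 - 0.2209) (by linarith : (0:ℝ) ≤ a3 - 1.876),
      sq_nonneg a2]
  · nlinarith [mul_nonneg (by linarith : (0:ℝ) ≤ Y + 1) (by linarith : (0:ℝ) ≤ a4 + 1.121),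
      mul_nonneg (by linarith : (0:ℝ) ≤ 0.29 - a1) (by linarith : (0:ℝ) ≤ 2.115 - a3),
      sq_nonneg (a2 - 0.2962), sq_nonneg (a2 + 0.145)]

private lemma R6 (Y a1 a2 a3 a4 a5 : ℝ) (hY1 : -1 ≤ Y) (hY2 : Y ≤ -0.94)
    (h1a : 0.2209 ≤ a1) (h1b : a1 ≤ 0.29) (h2a : -0.145 ≤ a2) (h2b : a2 ≤ 0.2962)
    (h3a : 1.876 ≤ a3) (h3b : a3 ≤ 2.115) (h4a : -1.121 ≤ a4) (h4b : a4 ≤ -0.7528)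
    (h5a : 1.182 ≤ a5) (h5b : a5 ≤ 1.919) :
    -3.306 ≤ Y * a5 / 2 + 5 / 2 * (a1 * a4) + 5 * (a2 * a3) ∧
      Y * a5 / 2 + 5 / 2 * (a1 * a4) + 5 * (a2 * a3) ≤ 2.162 := by
  constructor
  · nlinarith [mul_nonneg (by linarith : (0:ℝ) ≤ Y + 1) (by linarith : (0:ℝ) ≤ 1.919 - a5),
      mul_nonneg (by linarith : (0:ℝ) ≤ 0.29 - a1) (by linarith : (0:ℝ) ≤ -0.7528 - a4),
      mul_nonneg (by linarith : (0:ℝ) ≤ a2 + 0.145) (by linarith : (0:ℝ) ≤ a3 - 1.876)]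
  · nlinarith [mul_nonneg (by linarith : (0:ℝ) ≤ -0.94 - Y) (by linarith : (0:ℝ) ≤ a5 - 1.182),
      mul_nonneg (by linarith : (0:ℝ) ≤ a1 - 0.2209) (by linarith : (0:ℝ) ≤ -0.7528 - a4),
      mul_nonneg (by linarith : (0:ℝ) ≤ 0.2962 - a2) (by linarith : (0:ℝ) ≤ 2.115 - a3)]

private lemma R7 (Y a1 a2 a3 a4 a5 a6 : ℝ) (hY1 : -1 ≤ Y) (hY2 : Y ≤ -0.94)
    (h1a : 0.2209 ≤ a1) (h1b : a1 ≤ 0.29) (h2a : -0.145 ≤ a2) (h2b : a2 ≤ 0.2962)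
    (h3a : 1.876 ≤ a3) (h3b : a3 ≤ 2.115) (h4a : -1.121 ≤ a4) (h4b : a4 ≤ -0.7528)
    (h5a : 1.182 ≤ a5) (h5b : a5 ≤ 1.919) (h6a : -3.306 ≤ a6) (h6b : a6 ≤ 2.162) :
    14.59 ≤ Y * a6 / 2 + 3 * (a1 * a5) + 15 / 2 * (a2 * a4) + 5 * a3 ^ 2 ∧
      Y * a6 / 2 + 3 * (a1 * a5) + 15 / 2 * (a2 * a4) + 5 * a3 ^ 2 ≤ 27.12 := by
  constructor
  · nlinarith [mul_nonneg (by linarith : (0:ℝ) ≤ Y + 1) (by linarith : (0:ℝ) ≤ 2.162 - a6),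
      mul_nonneg (by linarith : (0:ℝ) ≤ a1 - 0.2209) (by linarith : (0:ℝ) ≤ a5 - 1.182),
      mul_nonneg (by linarith : (0:ℝ) ≤ 0.2962 - a2) (by linarith : (0:ℝ) ≤ -0.7528 - a4),
      sq_nonneg (a3 - 1.876)]
  · nlinarith [mul_nonneg (by linarith : (0:ℝ) ≤ Y + 1) (by linarith : (0:ℝ) ≤ a6 + 3.306),
      mul_nonneg (by linarith : (0:ℝ) ≤ 0.29 - a1) (by linarith : (0:ℝ) ≤ 1.919 - a5),
      mul_nonneg (by linarith : (0:ℝ) ≤ a2 + 0.145) (by linarith : (0:ℝ) ≤ a4 + 1.121),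
      sq_nonneg (2.115 - a3)]

/-- If `y` is infinitely differentiable on an open interval containing
`[0, 0.2]`, with `y 0 = -1` and `y' x = x² + y(x)²/4` there, then
`14.59 ≤ y⁽7⁾ x ≤ 27.12` for all `x ∈ [0, 0.2]`. -/
theorem riccati_deriv7_bounds (y : ℝ → ℝ) (s : Set ℝ) (hs : IsOpen s)
    (hsub : Set.Icc (0 : ℝ) 0.2 ⊆ s) (hsmooth : ContDiffOn ℝ (⊤ : ℕ∞) y s)
    (h0 : y 0 = -1)
    (hde : ∀ x ∈ s, HasDerivAt y (x ^ 2 + (y x) ^ 2 / 4) x) :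
    ∀ x ∈ Set.Icc (0 : ℝ) 0.2,
      14.59 ≤ iteratedDeriv 7 y x ∧ iteratedDeriv 7 y x ≤ 27.12 := by
  -- derivative chain
  have hy' : ∀ t ∈ s, HasDerivAt y (D1 y t) t := fun t ht => hde t ht
  have h1 : ∀ t ∈ s, HasDerivAt (D1 y) (D2 y t) t := by
    intro t ht
    refine hasDerivAt_congr_deriv ((hasDerivAt_pow 2 t).add (((hde t ht).pow 2).div_const 4)) ?_
    simp only [D1, D2]; push_cast; ring
  have h2 : ∀ t ∈ s, HasDerivAt (D2 y) (D3 y t) t := by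
    intro t ht
    refine hasDerivAt_congr_deriv (((hasDerivAt_id t).const_mul 2).add
      (((hde t ht).mul (h1 t ht)).div_const 2)) ?_
    simp only [D1, D2, D3]; push_cast; ring
  have h3 : ∀ t ∈ s, HasDerivAt (D3 y) (D4 y t) t := by
    intro t ht
    refine hasDerivAt_congr_deriv (((((h1 t ht).pow 2).add
      ((hde t ht).mul (h2 t ht))).div_const 2).const_add 2) ?_
    simp only [D1, D2, D3, D4]; push_cast; ring
  have h4 : ∀ t ∈ s, HasDerivAt (D4 y) (D5 y t) t := by
    intro t ht
    refine hasDerivAt_congr_deriv ((((hde t ht).mul (h3 t ht)).div_const 2).add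
      (((h1 t ht).mul (h2 t ht)).const_mul (3 / 2))) ?_
    simp only [D1, D2, D3, D4, D5]; push_cast; ring
  have h5 : ∀ t ∈ s, HasDerivAt (D5 y) (D6 y t) t := by
    intro t ht
    refine hasDerivAt_congr_deriv (((((hde t ht).mul (h4 t ht)).div_const 2).add
      (((h1 t ht).mul (h3 t ht)).const_mul 2)).add
      (((h2 t ht).pow 2).const_mul (3 / 2))) ?_
    simp only [D1, D2, D3, D4, D5, D6]; push_cast; ring
  have h6 : ∀ t ∈ s, HasDerivAt (D6 y) (D7 y t) t := by
    intro t ht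
    refine hasDerivAt_congr_deriv (((((hde t ht).mul (h5 t ht)).div_const 2).add
      (((h1 t ht).mul (h4 t ht)).const_mul (5 / 2))).add
      (((h2 t ht).mul (h3 t ht)).const_mul 5)) ?_
    simp only [D1, D2, D3, D4, D5, D6, D7]; push_cast; ring
  -- iterated derivatives agree with the chain on `s`
  have derstep : ∀ (n : ℕ) (d dn : ℝ → ℝ), (∀ t ∈ s, iteratedDeriv n y t = d t) →
      (∀ t ∈ s, HasDerivAt d (dn t) t) → ∀ t ∈ s, iteratedDeriv (n + 1) y t = dn t := by
    intro n d dn hI hD t ht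
    rw [iteratedDeriv_succ]
    have hev : iteratedDeriv n y =ᶠ[nhds t] d :=
      Filter.eventuallyEq_of_mem (hs.mem_nhds ht) fun u hu => hI u hu
    rw [hev.deriv_eq, (hD t ht).deriv]
  have e0 : ∀ t ∈ s, iteratedDeriv 0 y t = y t := by intro t ht; simp
  have e1 := derstep 0 y (D1 y) e0 hy'
  have e2 := derstep 1 (D1 y) (D2 y) e1 h1
  have e3 := derstep 2 (D2 y) (D3 y) e2 h2
  have e4 := derstep 3 (D3 y) (D4 y) e3 h3
  have e5 := derstep 4 (D4 y) (D5 y) e4 h4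
  have e6 := derstep 5 (D5 y) (D6 y) e5 h5
  have e7 := derstep 6 (D6 y) (D7 y) e6 h6
  -- bounds on y on [0, 0.2]
  have hcont : ContinuousOn y (Set.Icc (0:ℝ) 0.2) := hsmooth.continuousOn.mono hsub
  have hyU : ∀ t ∈ Set.Icc (0:ℝ) 0.2, y t ≤ -1 + 0.3 * t := by
    intro t ht
    refine image_le_of_deriv_right_lt_deriv_boundary (f' := fun u => u ^ 2 + y u ^ 2 / 4)
      (B := fun u => -1 + 0.3 * u) (B' := fun _ => 0.3) hcont
      (fun u hu => (hde u (hsub ⟨hu.1, hu.2.le⟩)).hasDerivWithinAt) (by norm_num [h0])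
      (fun u => by simpa using ((hasDerivAt_id u).const_mul (0.3:ℝ)).const_add (-1)) ?_ ht
    intro u hu heq
    show u ^ 2 + y u ^ 2 / 4 < 0.3
    have heq' : y u = -1 + 0.3 * u := heq
    rw [heq']
    have hu1 : (0:ℝ) ≤ u := hu.1
    have hu2 : u ≤ 0.2 := le_of_lt hu.2
    nlinarith [mul_nonneg hu1 (by linarith : (0:ℝ) ≤ 0.2 - u)]
  have hmono : MonotoneOn y (Set.Icc (0:ℝ) 0.2) := by
    apply monotoneOn_of_deriv_nonneg (convex_Icc 0 0.2) hcont
    · intro t ht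
      exact (hde t (hsub (interior_subset ht))).differentiableAt.differentiableWithinAt
    · intro t ht
      rw [(hde t (hsub (interior_subset ht))).deriv]
      positivity
  -- main conclusion
  intro x hx
  have hxs : x ∈ s := hsub hx
  obtain ⟨hx0, hx2⟩ := hx
  have hY1 : -1 ≤ y x := by
    have := hmono (Set.left_mem_Icc.2 (by norm_num)) ⟨hx0, hx2⟩ hx0
    rw [h0] at this; linarith
  have hY2 : y x ≤ -0.94 := by
    have := hyU x ⟨hx0, hx2⟩; linarith
  obtain ⟨h1a, h1b⟩ : 0.2209 ≤ D1 y x ∧ D1 y x ≤ 0.29 := R1 x (y x) hx0 hx2 hY1 hY2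
  obtain ⟨h2a, h2b⟩ : -0.145 ≤ D2 y x ∧ D2 y x ≤ 0.2962 :=
    R2 x (y x) (D1 y x) hx0 hx2 hY1 hY2 h1a h1b
  obtain ⟨h3a, h3b⟩ : 1.876 ≤ D3 y x ∧ D3 y x ≤ 2.115 :=
    R3 (y x) (D1 y x) (D2 y x) hY1 hY2 h1a h1b h2a h2b
  obtain ⟨h4a, h4b⟩ : -1.121 ≤ D4 y x ∧ D4 y x ≤ -0.7528 :=
    R4 (y x) (D1 y x) (D2 y x) (D3 y x) hY1 hY2 h1a h1b h2a h2b h3a h3b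
  obtain ⟨h5a, h5b⟩ : 1.182 ≤ D5 y x ∧ D5 y x ≤ 1.919 :=
    R5 (y x) (D1 y x) (D2 y x) (D3 y x) (D4 y x) hY1 hY2 h1a h1b h2a h2b h3a h3b h4a h4b
  obtain ⟨h6a, h6b⟩ : -3.306 ≤ D6 y x ∧ D6 y x ≤ 2.162 :=
    R6 (y x) (D1 y x) (D2 y x) (D3 y x) (D4 y x) (D5 y x) hY1 hY2 h1a h1b h2a h2b h3a h3b h4a h4b h5a h5b
  have hfin : 14.59 ≤ D7 y x ∧ D7 y x ≤ 27.12 :=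
    R7 (y x) (D1 y x) (D2 y x) (D3 y x) (D4 y x) (D5 y x) (D6 y x) hY1 hY2
      h1a h1b h2a h2b h3a h3b h4a h4b h5a h5b h6a h6b
  have E : iteratedDeriv 7 y x = D7 y x := e7 x hxs
  rw [E]
  exact hfin
end

section
/- Let y : ℝ → ℝ be infinitely differentiable on an open interval containing [0, 0.2], satisfying y(0) = −1 and y'(x) = x² + y(x)²/4 there. Then for every x in [0, 0.2], −61.96 ≤ y⁽⁸⁾(x) ≤ −22.73. -/
open Set Filter in
theorem ybounds (y : ℝ → ℝ) (s : Set ℝ)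
    (hsub : Set.Icc (0 : ℝ) 0.2 ⊆ s) (h0 : y 0 = -1)
    (hde : ∀ x ∈ s, HasDerivAt y (x ^ 2 + (y x) ^ 2 / 4) x) :
    ∀ x ∈ Set.Icc (0:ℝ) 0.2, -1 ≤ y x ∧ y x ≤ -1 + 0.29 * x := by
  have hmono : MonotoneOn y (Set.Icc (0:ℝ) 0.2) := by
    apply monotoneOn_of_deriv_nonneg (convex_Icc _ _)
    · exact fun x hx => ((hde x (hsub hx)).continuousAt).continuousWithinAt
    · exact fun x hx => ((hde x (hsub (interior_subset hx))).differentiableAt).differentiableWithinAt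
    · intro x hx
      rw [(hde x (hsub (interior_subset hx))).deriv]
      positivity
  have hlo : ∀ x ∈ Set.Icc (0:ℝ) 0.2, -1 ≤ y x := by
    intro x hx
    have := hmono (Set.left_mem_Icc.2 (by norm_num)) hx hx.1
    rw [h0] at this; exact this
  have mvt : ∀ b ∈ Set.Icc (0:ℝ) 0.2, (∀ t ∈ Set.Icc (0:ℝ) b, y t ≤ 0) →
      y b ≤ -1 + 0.29 * b := by
    intro b hb hneg
    have key := norm_image_sub_le_of_norm_deriv_le_segment'
      (f := y) (f' := fun t => t ^ 2 + (y t) ^ 2 / 4) (a := 0) (b := b) (C := 0.29)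
      (fun t ht => ((hde t (hsub ⟨ht.1, le_trans ht.2 hb.2⟩)).hasDerivWithinAt))
      (fun t ht => by
        have h1 : -1 ≤ y t := hlo t ⟨ht.1, le_trans (le_of_lt ht.2) hb.2⟩
        have h2 : y t ≤ 0 := hneg t ⟨ht.1, le_of_lt ht.2⟩
        have h3 : 0 ≤ t := ht.1
        have h4 : t ≤ 0.2 := le_trans (le_of_lt ht.2) hb.2
        rw [Real.norm_eq_abs, abs_of_nonneg (by positivity)]
        nlinarith) b (Set.right_mem_Icc.2 hb.1)
    rw [Real.norm_eq_abs] at key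
    have h2 := (abs_le.1 key).2
    linarith
  have hneg : ∀ x ∈ Set.Icc (0:ℝ) 0.2, y x < -0.9 := by
    by_contra hcon
    push_neg at hcon
    obtain ⟨x₀', hx₀', hy₀'⟩ := hcon
    set A := {x ∈ Set.Icc (0:ℝ) 0.2 | -0.9 ≤ y x} with hA
    have hcont : ContinuousOn y (Set.Icc (0:ℝ) 0.2) :=
      fun t ht => ((hde t (hsub ht)).continuousAt).continuousWithinAt
    have hAne : A.Nonempty := ⟨x₀', hx₀', hy₀'⟩
    have hAclosed : IsClosed A := by
      have hAeq : A = Set.Icc (0:ℝ) 0.2 ∩ y ⁻¹' (Set.Ici (-0.9)) := by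
        ext t; simp [hA, Set.mem_setOf_eq, and_comm]
      rw [hAeq]
      exact hcont.preimage_isClosed_of_isClosed isClosed_Icc isClosed_Ici
    have hAbdd : BddBelow A := ⟨0, fun t ht => ht.1.1⟩
    set x₀ := sInf A with hx₀def
    have hx₀A : x₀ ∈ A := hAclosed.csInf_mem hAne hAbdd
    have hx₀mem : x₀ ∈ Set.Icc (0:ℝ) 0.2 := hx₀A.1
    have hy₀ : -0.9 ≤ y x₀ := hx₀A.2
    have hx₀ub : x₀ ≤ 0.2 := hx₀mem.2
    have hx₀pos : 0 < x₀ := by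
      rcases lt_or_eq_of_le hx₀mem.1 with h | h
      · exact h
      · exfalso; rw [← h, h0] at hy₀; linarith
    have hy₀le : y x₀ ≤ -0.9 := by
      have htend : Filter.Tendsto y (nhdsWithin x₀ (Set.Iio x₀)) (nhds (y x₀)) :=
        ((hde x₀ (hsub hx₀mem)).continuousAt).tendsto.mono_left nhdsWithin_le_nhds
      have hev : ∀ᶠ t in nhdsWithin x₀ (Set.Iio x₀), y t ≤ -0.9 := by
        filter_upwards [Ioo_mem_nhdsLT_of_mem (Set.mem_Ioc.2 ⟨hx₀pos, le_refl x₀⟩)]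
          with t ht
        have htIcc : t ∈ Set.Icc (0:ℝ) 0.2 := ⟨le_of_lt ht.1, le_trans (le_of_lt ht.2) hx₀ub⟩
        by_contra hcc
        push_neg at hcc
        have htA : t ∈ A := ⟨htIcc, le_of_lt hcc⟩
        exact absurd (csInf_le hAbdd htA) (not_le.2 ht.2)
      exact le_of_tendsto htend hev
    have hbefore : ∀ t ∈ Set.Icc (0:ℝ) x₀, y t ≤ 0 := by
      intro t ht
      have : y t ≤ y x₀ := hmono ⟨ht.1, le_trans ht.2 hx₀ub⟩ hx₀mem ht.2
      linarith
    have := mvt x₀ hx₀mem hbefore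
    linarith
  intro x hx
  refine ⟨hlo x hx, mvt x hx fun t ht => ?_⟩
  have := hneg t ⟨ht.1, le_trans ht.2 hx.2⟩
  linarith

theorem step (y : ℝ → ℝ) (s : Set ℝ) (hs : IsOpen s) (F G : ℝ → ℝ) (n : ℕ)
    (h1 : ∀ x ∈ s, iteratedDeriv n y x = F x)
    (h2 : ∀ x ∈ s, HasDerivAt F (G x) x) :
    ∀ x ∈ s, iteratedDeriv (n+1) y x = G x := by
  intro x hx
  rw [iteratedDeriv_succ]
  have he : iteratedDeriv n y =ᶠ[nhds x] F :=
    Filter.eventuallyEq_of_mem (hs.mem_nhds hx) h1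
  rw [he.deriv_eq, (h2 x hx).deriv]

set_option maxHeartbeats 4000000 in
/-- If `y` is infinitely differentiable on an open interval containing
`[0, 0.2]`, with `y 0 = -1` and `y' x = x² + y(x)²/4` there, then
`-61.96 ≤ y⁽8⁾ x ≤ -22.73` for all `x ∈ [0, 0.2]`. -/
theorem riccati_deriv8_bounds (y : ℝ → ℝ) (s : Set ℝ) (hs : IsOpen s)
    (hsub : Set.Icc (0 : ℝ) 0.2 ⊆ s) (hsmooth : ContDiffOn ℝ (⊤ : ℕ∞) y s)
    (h0 : y 0 = -1)
    (hde : ∀ x ∈ s, HasDerivAt y (x ^ 2 + (y x) ^ 2 / 4) x) :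
    ∀ x ∈ Set.Icc (0 : ℝ) 0.2,
      -61.96 ≤ iteratedDeriv 8 y x ∧ iteratedDeriv 8 y x ≤ -22.73 := by
  have d1 : ∀ x ∈ s, HasDerivAt (fun t => (1/4 : ℝ) * y t ^ 2 + (1 : ℝ) * t ^ 2) ((1/8 : ℝ) * y x ^ 3 + (2 : ℝ) * x ^ 1 + (1/2 : ℝ) * (x ^ 2 * y x ^ 1)) x := by
    intro x hx
    have hy := hde x hx
    have H := ((hy.fun_pow 2).const_mul (1/4 : ℝ)).add ((hasDerivAt_pow 2 x).const_mul (1 : ℝ))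
    refine H.congr_deriv ?_
    push_cast
    ring
  have d2 : ∀ x ∈ s, HasDerivAt (fun t => (1/8 : ℝ) * y t ^ 3 + (2 : ℝ) * t ^ 1 + (1/2 : ℝ) * (t ^ 2 * y t ^ 1)) ((2 : ℝ) + (3/32 : ℝ) * y x ^ 4 + (1 : ℝ) * (x ^ 1 * y x ^ 1) + (1/2 : ℝ) * (x ^ 2 * y x ^ 2) + (1/2 : ℝ) * x ^ 4) x := by
    intro x hx
    have hy := hde x hx
    have H := (((hy.fun_pow 3).const_mul (1/8 : ℝ)).add ((hasDerivAt_pow 1 x).const_mul (2 : ℝ))).add (((hasDerivAt_pow 2 x).mul (hy.fun_pow 1)).const_mul (1/2 : ℝ))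
    refine H.congr_deriv ?_
    push_cast
    ring
  have d3 : ∀ x ∈ s, HasDerivAt (fun t => (2 : ℝ) + (3/32 : ℝ) * y t ^ 4 + (1 : ℝ) * (t ^ 1 * y t ^ 1) + (1/2 : ℝ) * (t ^ 2 * y t ^ 2) + (1/2 : ℝ) * t ^ 4) ((1 : ℝ) * y x ^ 1 + (3/32 : ℝ) * y x ^ 5 + (5/4 : ℝ) * (x ^ 1 * y x ^ 2) + (5/8 : ℝ) * (x ^ 2 * y x ^ 3) + (3 : ℝ) * x ^ 3 + (1 : ℝ) * (x ^ 4 * y x ^ 1)) x := by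
    intro x hx
    have hy := hde x hx
    have H := ((((hasDerivAt_const x (2 : ℝ)).add ((hy.fun_pow 4).const_mul (3/32 : ℝ))).add (((hasDerivAt_pow 1 x).mul (hy.fun_pow 1)).const_mul (1 : ℝ))).add (((hasDerivAt_pow 2 x).mul (hy.fun_pow 2)).const_mul (1/2 : ℝ))).add ((hasDerivAt_pow 4 x).const_mul (1/2 : ℝ))
    refine H.congr_deriv ?_
    push_cast
    ring
  have d4 : ∀ x ∈ s, HasDerivAt (fun t => (1 : ℝ) * y t ^ 1 + (3/32 : ℝ) * y t ^ 5 + (5/4 : ℝ) * (t ^ 1 * y t ^ 2) + (5/8 : ℝ) * (t ^ 2 * y t ^ 3) + (3 : ℝ) * t ^ 3 + (1 : ℝ) * (t ^ 4 * y t ^ 1)) ((3/2 : ℝ) * y x ^ 2 + (15/128 : ℝ) * y x ^ 6 + (15/8 : ℝ) * (x ^ 1 * y x ^ 3) + (10 : ℝ) * x ^ 2 + (15/16 : ℝ) * (x ^ 2 * y x ^ 4) + (13/2 : ℝ) * (x ^ 3 * y x ^ 1) + (17/8 : ℝ) * (x ^ 4 * y x ^ 2) + (1 : ℝ) * x ^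 6) x := by
    intro x hx
    have hy := hde x hx
    have H := ((((((hy.fun_pow 1).const_mul (1 : ℝ)).add ((hy.fun_pow 5).const_mul (3/32 : ℝ))).add (((hasDerivAt_pow 1 x).mul (hy.fun_pow 2)).const_mul (5/4 : ℝ))).add (((hasDerivAt_pow 2 x).mul (hy.fun_pow 3)).const_mul (5/8 : ℝ))).add ((hasDerivAt_pow 3 x).const_mul (3 : ℝ))).add (((hasDerivAt_pow 4 x).mul (hy.fun_pow 1)).const_mul (1 : ℝ))
    refine H.congr_deriv ?_
    push_cast
    ring
  have d5 : ∀ x ∈ s, HasDerivAt (fun t => (3/2 : ℝ) * y t ^ 2 + (15/128 : ℝ) * y t ^ 6 + (15/8 : ℝ) * (t ^ 1 * y t ^ 3) + (10 : ℝ) * t ^ 2 + (15/16 : ℝ) * (t ^ 2 * y t ^ 4) + (13/2 : ℝ) * (t ^ 3 * y t ^ 1) + (17/8 : ℝ) * (t ^ 4 * y t ^ 2) + (1 : ℝ) * t ^ 6) ((21/8 : ℝ) * y x ^ 3 + (45/256 : ℝ) * y x ^ 7 + (20 : ℝ) * x ^ 1 + (105/32 : ℝ) * (x ^ 1 * y x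 ^ 4) + (45/2 : ℝ) * (x ^ 2 * y x ^ 1) + (105/64 : ℝ) * (x ^ 2 * y x ^ 5) + (63/4 : ℝ) * (x ^ 3 * y x ^ 2) + (77/16 : ℝ) * (x ^ 4 * y x ^ 3) + (25/2 : ℝ) * x ^ 5 + (17/4 : ℝ) * (x ^ 6 * y x ^ 1)) x := by
    intro x hx
    have hy := hde x hx
    have H := ((((((((hy.fun_pow 2).const_mul (3/2 : ℝ)).add ((hy.fun_pow 6).const_mul (15/128 : ℝ))).add (((hasDerivAt_pow 1 x).mul (hy.fun_pow 3)).const_mul (15/8 : ℝ))).add ((hasDerivAt_pow 2 x).const_mul (10 : ℝ))).add (((hasDerivAt_pow 2 x).mul (hy.fun_pow 4)).const_mul (15/16 : ℝ))).add (((hasDerivAt_pow 3 x).mul (hy.fun_pow 1)).const_mul (13/2 : ℝ))).add (((hasDerivAt_pow 4 x).mul (hy.fun_pow 2)).const_mul (17/8 : ℝ))).add ((hasDerivAt_pow 6 x).const_mul (1 : ℝ))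
    refine H.congr_deriv ?_
    push_cast
    ring
  have d6 : ∀ x ∈ s, HasDerivAt (fun t => (21/8 : ℝ) * y t ^ 3 + (45/256 : ℝ) * y t ^ 7 + (20 : ℝ) * t ^ 1 + (105/32 : ℝ) * (t ^ 1 * y t ^ 4) + (45/2 : ℝ) * (t ^ 2 * y t ^ 1) + (105/64 : ℝ) * (t ^ 2 * y t ^ 5) + (63/4 : ℝ) * (t ^ 3 * y t ^ 2) + (77/16 : ℝ) * (t ^ 4 * y t ^ 3) + (25/2 : ℝ) * t ^ 5 + (17/4 : ℝ) * (t ^ 6 * y t ^ 1)) ((20 : ℝ) + (21/4 : ℝ) * y x ^ 4 + (315/1024 : ℝ) * y x ^ 8 + (45 : ℝ) * (x ^ 1 * y x ^ 1) + (105/16 : ℝ) * (x ^ 1 * y x ^ 5) + (243/4 : ℝ) * (x ^ 2 * y x ^ 2) + (105/32 : ℝ) * (x ^ 2 * y x ^ 6) + (161/4 : ℝ) * (x ^ 3 * y x ^ 3) + (85 : ℝ) * x ^ 4 + (189/16 : ℝ) * (x ^ 4 * y x ^ 4) + (57 : ℝ) * (x ^ 5 * y x ^ 1) + (31/2 : ℝ)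 * (x ^ 6 * y x ^ 2) + (17/4 : ℝ) * x ^ 8) x := by
    intro x hx
    have hy := hde x hx
    have H := ((((((((((hy.fun_pow 3).const_mul (21/8 : ℝ)).add ((hy.fun_pow 7).const_mul (45/256 : ℝ))).add ((hasDerivAt_pow 1 x).const_mul (20 : ℝ))).add (((hasDerivAt_pow 1 x).mul (hy.fun_pow 4)).const_mul (105/32 : ℝ))).add (((hasDerivAt_pow 2 x).mul (hy.fun_pow 1)).const_mul (45/2 : ℝ))).add (((hasDerivAt_pow 2 x).mul (hy.fun_pow 5)).const_mul (105/64 : ℝ))).add (((hasDerivAt_pow 3 x).mul (hy.fun_pow 2)).const_mul (63/4 : ℝ))).add (((hasDerivAt_pow 4 x).mul (hy.fun_pow 3)).const_mul (77/16 : ℝ))).add ((hasDerivAt_pow 5 x).const_mul (25/2 : ℝ))).add (((hasDerivAt_pow 6 x).mul (hy.fun_pow 1)).const_mul (17/4 : ℝ))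
    refine H.congr_deriv ?_
    push_cast
    ring
  have d7 : ∀ x ∈ s, HasDerivAt (fun t => (20 : ℝ) + (21/4 : ℝ) * y t ^ 4 + (315/1024 : ℝ) * y t ^ 8 + (45 : ℝ) * (t ^ 1 * y t ^ 1) + (105/16 : ℝ) * (t ^ 1 * y t ^ 5) + (243/4 : ℝ) * (t ^ 2 * y t ^ 2) + (105/32 : ℝ) * (t ^ 2 * y t ^ 6) + (161/4 : ℝ) * (t ^ 3 * y t ^ 3) + (85 : ℝ) * t ^ 4 + (189/16 : ℝ) * (t ^ 4 * y t ^ 4) + (57 : ℝ) * (t ^ 5 * y t ^ 1) + (31/2 : ℝ) * (t ^ 6 * y t ^ 2) + (17/4 : ℝ) * t ^ 8) ((45 : ℝ) * y x ^ 1 + (189/16 : ℝ) * y x ^ 5 + (315/512 : ℝ) * y x ^ 9 + (531/4 : ℝ) * (x ^ 1 * y x ^ 2) + (945/64 : ℝ) * (x ^ 1 * y x ^ 6) + (1377/8 : ℝ) * (x ^ 2 * y x ^ 3) + (945/128 : ℝ) * (x ^ 2 * y x ^ 7) + (385 : ℝ) * x ^ 3 + (441/4 : ℝ) * (x ^ 3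 * y x ^ 4) + (813/2 : ℝ) * (x ^ 4 * y x ^ 1) + (63/2 : ℝ) * (x ^ 4 * y x ^ 5) + (228 : ℝ) * (x ^ 5 * y x ^ 2) + (55 : ℝ) * (x ^ 6 * y x ^ 3) + (91 : ℝ) * x ^ 7 + (31 : ℝ) * (x ^ 8 * y x ^ 1)) x := by
    intro x hx
    have hy := hde x hx
    have H := ((((((((((((hasDerivAt_const x (20 : ℝ)).add ((hy.fun_pow 4).const_mul (21/4 : ℝ))).add ((hy.fun_pow 8).const_mul (315/1024 : ℝ))).add (((hasDerivAt_pow 1 x).mul (hy.fun_pow 1)).const_mul (45 : ℝ))).add (((hasDerivAt_pow 1 x).mul (hy.fun_pow 5)).const_mul (105/16 : ℝ))).add (((hasDerivAt_pow 2 x).mul (hy.fun_pow 2)).const_mul (243/4 : ℝ))).add (((hasDerivAt_pow 2 x).mul (hy.fun_pow 6)).const_mul (105/32 : ℝ))).add (((hasDerivAt_pow 3 x).mul (hy.fun_pow 3)).const_mul (161/4 : ℝ))).add ((hasDerivAt_pow 4 x).const_mul (85 : ℝ))).add (((hasDerivAt_pow 4 x).mul (hy.fun_pow 4)).const_mul (189/16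 : ℝ))).add (((hasDerivAt_pow 5 x).mul (hy.fun_pow 1)).const_mul (57 : ℝ))).add (((hasDerivAt_pow 6 x).mul (hy.fun_pow 2)).const_mul (31/2 : ℝ))).add ((hasDerivAt_pow 8 x).const_mul (17/4 : ℝ))
    refine H.congr_deriv ?_
    push_cast
    ring
  have d0 : ∀ x ∈ s, HasDerivAt y ((1/4 : ℝ) * y x ^ 2 + (1 : ℝ) * x ^ 2) x := by
    intro x hx
    convert hde x hx using 1
    ring
  have e0 : ∀ z ∈ s, iteratedDeriv 0 y z = y z := fun z _ => by rw [iteratedDeriv_zero]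
  have e1 := step y s hs y (fun x => (1/4 : ℝ) * y x ^ 2 + (1 : ℝ) * x ^ 2) 0 e0 d0
  have e2 := step y s hs (fun t => (1/4 : ℝ) * y t ^ 2 + (1 : ℝ) * t ^ 2) (fun x => (1/8 : ℝ) * y x ^ 3 + (2 : ℝ) * x ^ 1 + (1/2 : ℝ) * (x ^ 2 * y x ^ 1)) 1 e1 d1
  have e3 := step y s hs (fun t => (1/8 : ℝ) * y t ^ 3 + (2 : ℝ) * t ^ 1 + (1/2 : ℝ) * (t ^ 2 * y t ^ 1)) (fun x => (2 : ℝ) + (3/32 : ℝ) * y x ^ 4 + (1 : ℝ) * (x ^ 1 * y x ^ 1) + (1/2 : ℝ) * (x ^ 2 * y x ^ 2) + (1/2 : ℝ) * x ^ 4) 2 e2 d2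
  have e4 := step y s hs (fun t => (2 : ℝ) + (3/32 : ℝ) * y t ^ 4 + (1 : ℝ) * (t ^ 1 * y t ^ 1) + (1/2 : ℝ) * (t ^ 2 * y t ^ 2) + (1/2 : ℝ) * t ^ 4) (fun x => (1 : ℝ) * y x ^ 1 + (3/32 : ℝ) * y x ^ 5 + (5/4 : ℝ) * (x ^ 1 * y x ^ 2) + (5/8 : ℝ) * (x ^ 2 * y x ^ 3) + (3 : ℝ) * x ^ 3 + (1 : ℝ) * (x ^ 4 * y x ^ 1)) 3 e3 d3
  have e5 := step y s hs (fun t => (1 : ℝ) * y t ^ 1 + (3/32 : ℝ) * y t ^ 5 + (5/4 : ℝ) * (t ^ 1 * y t ^ 2) + (5/8 : ℝ) * (t ^ 2 * y t ^ 3) + (3 : ℝ) * t ^ 3 + (1 : ℝ) * (t ^ 4 * y t ^ 1)) (fun x => (3/2 : ℝ) * y x ^ 2 + (15/128 : ℝ) * y x ^ 6 + (15/8 : ℝ) * (x ^ 1 * y x ^ 3) + (10 : ℝ) * x ^ 2 + (15/16 : ℝ) * (x ^ 2 * y x ^ 4) + (13/2 : ℝ) * (x ^ 3 * y x ^ 1)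 + (17/8 : ℝ) * (x ^ 4 * y x ^ 2) + (1 : ℝ) * x ^ 6) 4 e4 d4
  have e6 := step y s hs (fun t => (3/2 : ℝ) * y t ^ 2 + (15/128 : ℝ) * y t ^ 6 + (15/8 : ℝ) * (t ^ 1 * y t ^ 3) + (10 : ℝ) * t ^ 2 + (15/16 : ℝ) * (t ^ 2 * y t ^ 4) + (13/2 : ℝ) * (t ^ 3 * y t ^ 1) + (17/8 : ℝ) * (t ^ 4 * y t ^ 2) + (1 : ℝ) * t ^ 6) (fun x => (21/8 : ℝ) * y x ^ 3 + (45/256 : ℝ) * y x ^ 7 + (20 : ℝ) * x ^ 1 + (105/32 : ℝ) * (x ^ 1 * y x ^ 4) + (45/2 : ℝ) * (x ^ 2 * y x ^ 1) + (105/64 : ℝ) * (x ^ 2 * y x ^ 5) + (63/4 : ℝ) * (x ^ 3 * y x ^ 2) + (77/16 : ℝ) * (x ^ 4 * y x ^ 3) + (25/2 : ℝ) * x ^ 5 + (17/4 : ℝ) * (x ^ 6 * y x ^ 1)) 5 e5 d5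
  have e7 := step y s hs (fun t => (21/8 : ℝ) * y t ^ 3 + (45/256 : ℝ) * y t ^ 7 + (20 : ℝ) * t ^ 1 + (105/32 : ℝ) * (t ^ 1 * y t ^ 4) + (45/2 : ℝ) * (t ^ 2 * y t ^ 1) + (105/64 : ℝ) * (t ^ 2 * y t ^ 5) + (63/4 : ℝ) * (t ^ 3 * y t ^ 2) + (77/16 : ℝ) * (t ^ 4 * y t ^ 3) + (25/2 : ℝ) * t ^ 5 + (17/4 : ℝ) * (t ^ 6 * y t ^ 1)) (fun x => (20 : ℝ) + (21/4 : ℝ) * y x ^ 4 + (315/1024 : ℝ) * y x ^ 8 + (45 : ℝ) * (x ^ 1 * y x ^ 1) + (105/16 : ℝ) * (x ^ 1 * y x ^ 5) + (243/4 : ℝ) * (x ^ 2 * y x ^ 2) + (105/32 : ℝ) * (x ^ 2 * y x ^ 6) + (161/4 : ℝ) * (x ^ 3 * y x ^ 3) + (85 : ℝ) * x ^ 4 + (189/16 : ℝ) * (x ^ 4 * y x ^ 4) + (57 : ℝ) * (x ^ 5 * y x ^ 1) + (31/2 : ℝ) * (x ^ 6 * y x ^ 2) + (17/4 : ℝ)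 * x ^ 8) 6 e6 d6
  have e8 := step y s hs (fun t => (20 : ℝ) + (21/4 : ℝ) * y t ^ 4 + (315/1024 : ℝ) * y t ^ 8 + (45 : ℝ) * (t ^ 1 * y t ^ 1) + (105/16 : ℝ) * (t ^ 1 * y t ^ 5) + (243/4 : ℝ) * (t ^ 2 * y t ^ 2) + (105/32 : ℝ) * (t ^ 2 * y t ^ 6) + (161/4 : ℝ) * (t ^ 3 * y t ^ 3) + (85 : ℝ) * t ^ 4 + (189/16 : ℝ) * (t ^ 4 * y t ^ 4) + (57 : ℝ) * (t ^ 5 * y t ^ 1) + (31/2 : ℝ) * (t ^ 6 * y t ^ 2) + (17/4 : ℝ) * t ^ 8) (fun x => (45 : ℝ) * y x ^ 1 + (189/16 : ℝ) * y x ^ 5 + (315/512 : ℝ) * y x ^ 9 + (531/4 : ℝ) * (x ^ 1 * y x ^ 2) + (945/64 : ℝ) * (x ^ 1 * y x ^ 6) + (1377/8 : ℝ) * (x ^ 2 * y x ^ 3) + (945/128 : ℝ) * (x ^ 2 * y x ^ 7) + (385 : ℝ) * x ^ 3 + (441/4 : ℝ) * (x ^ 3 * y x ^ 4) + (813/2 :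 ℝ) * (x ^ 4 * y x ^ 1) + (63/2 : ℝ) * (x ^ 4 * y x ^ 5) + (228 : ℝ) * (x ^ 5 * y x ^ 2) + (55 : ℝ) * (x ^ 6 * y x ^ 3) + (91 : ℝ) * x ^ 7 + (31 : ℝ) * (x ^ 8 * y x ^ 1)) 7 e7 d7
  intro x hx
  have hx0 : (0:ℝ) ≤ x := hx.1
  have hx2 : x ≤ 0.2 := hx.2
  have hyb := ybounds y s hsub h0 hde x hx
  have hv0 : (0:ℝ) ≤ y x + 1 := by linarith [hyb.1]
  have hvx : y x + 1 ≤ 0.29 * x := by linarith [hyb.2]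
  have hv058 : y x + 1 ≤ 0.058 := by linarith
  have h02 : (0:ℝ) ≤ 0.2 - x := by linarith
  have hB : (0:ℝ) ≤ (56115/512 : ℝ) + (-11331/32 : ℝ) * x ^ 1 + (72711/128 : ℝ) * x ^ 2 + (-441 : ℝ) * x ^ 3 + (564 : ℝ) * x ^ 4 + (-456 : ℝ) * x ^ 5 + (165 : ℝ) * x ^ 6 + (31 : ℝ) * x ^ 8 := by
    linarith [pow_le_pow_left₀ hx0 hx2 3, pow_le_pow_left₀ hx0 hx2 5, pow_nonneg hx0 2, pow_nonneg hx0 4, pow_nonneg hx0 6, pow_nonneg hx0 8]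
  have hvB := mul_le_mul_of_nonneg_right hvx hB
  have hvB0 := mul_nonneg hv0 hB
  have tL0 : (0:ℝ) ≤ (34453125/512 : ℝ) * x ^ 0 * (0.2 - x) ^ 8 := mul_nonneg (mul_nonneg (by norm_num) (pow_nonneg hx0 0)) (pow_nonneg h02 8)
  have tL1 : (0:ℝ) ≤ (386015625/32 : ℝ) * x ^ 1 * (0.2 - x) ^ 7 := mul_nonneg (mul_nonneg (by norm_num) (pow_nonneg hx0 1)) (pow_nonneg h02 7)
  have tL2 : (0:ℝ) ≤ (638015625/8 : ℝ) * x ^ 2 * (0.2 - x) ^ 6 := mul_nonneg (mul_nonneg (by norm_num) (pow_nonneg hx0 2)) (pow_nonneg h02 6)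
  have tL3 : (0:ℝ) ≤ (14752315625/64 : ℝ) * x ^ 3 * (0.2 - x) ^ 5 := mul_nonneg (mul_nonneg (by norm_num) (pow_nonneg hx0 3)) (pow_nonneg h02 5)
  have tL4 : (0:ℝ) ≤ (95607248125/256 : ℝ) * x ^ 4 * (0.2 - x) ^ 4 := mul_nonneg (mul_nonneg (by norm_num) (pow_nonneg hx0 4)) (pow_nonneg h02 4)
  have tL5 : (0:ℝ) ≤ (1461780875/4 : ℝ) * x ^ 5 * (0.2 - x) ^ 3 := mul_nonneg (mul_nonneg (by norm_num) (pow_nonneg hx0 5)) (pow_nonneg h02 3)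
  have tL6 : (0:ℝ) ≤ (13807873375/64 : ℝ) * x ^ 6 * (0.2 - x) ^ 2 := mul_nonneg (mul_nonneg (by norm_num) (pow_nonneg hx0 6)) (pow_nonneg h02 2)
  have tL7 : (0:ℝ) ≤ (4550948245/64 : ℝ) * x ^ 7 * (0.2 - x) ^ 1 := mul_nonneg (mul_nonneg (by norm_num) (pow_nonneg hx0 7)) (pow_nonneg h02 1)
  have tL8 : (0:ℝ) ≤ (5165360713/512 : ℝ) * x ^ 8 * (0.2 - x) ^ 0 := mul_nonneg (mul_nonneg (by norm_num) (pow_nonneg hx0 8)) (pow_nonneg h02 0)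
  have tU0 : (0:ℝ) ≤ (34027734375/512 : ℝ) * x ^ 0 * (0.2 - x) ^ 9 := mul_nonneg (mul_nonneg (by norm_num) (pow_nonneg hx0 0)) (pow_nonneg h02 9)
  have tU1 : (0:ℝ) ≤ (1081558828125/2048 : ℝ) * x ^ 1 * (0.2 - x) ^ 8 := mul_nonneg (mul_nonneg (by norm_num) (pow_nonneg hx0 1)) (pow_nonneg h02 8)
  have tU2 : (0:ℝ) ≤ (474703509375/256 : ℝ) * x ^ 2 * (0.2 - x) ^ 7 := mul_nonneg (mul_nonneg (by norm_num) (pow_nonneg hx0 2)) (pow_nonneg h02 7)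
  have tU3 : (0:ℝ) ≤ (240998391875/64 : ℝ) * x ^ 3 * (0.2 - x) ^ 6 := mul_nonneg (mul_nonneg (by norm_num) (pow_nonneg hx0 3)) (pow_nonneg h02 6)
  have tU4 : (0:ℝ) ≤ (1242804951375/256 : ℝ) * x ^ 4 * (0.2 - x) ^ 5 := mul_nonneg (mul_nonneg (by norm_num) (pow_nonneg hx0 4)) (pow_nonneg h02 5)
  have tU5 : (0:ℝ) ≤ (4195155769725/1024 : ℝ) * x ^ 5 * (0.2 - x) ^ 4 := mul_nonneg (mul_nonneg (by norm_num) (pow_nonneg hx0 5)) (pow_nonneg h02 4)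
  have tU6 : (0:ℝ) ≤ (574107722655/256 : ℝ) * x ^ 6 * (0.2 - x) ^ 3 := mul_nonneg (mul_nonneg (by norm_num) (pow_nonneg hx0 6)) (pow_nonneg h02 3)
  have tU7 : (0:ℝ) ≤ (193551643175/256 : ℝ) * x ^ 7 * (0.2 - x) ^ 2 := mul_nonneg (mul_nonneg (by norm_num) (pow_nonneg hx0 7)) (pow_nonneg h02 2)
  have tU8 : (0:ℝ) ≤ (70764067455/512 : ℝ) * x ^ 8 * (0.2 - x) ^ 1 := mul_nonneg (mul_nonneg (by norm_num) (pow_nonneg hx0 8)) (pow_nonneg h02 1)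
  have tU9 : (0:ℝ) ≤ (496615079337/51200 : ℝ) * x ^ 9 * (0.2 - x) ^ 0 := mul_nonneg (mul_nonneg (by norm_num) (pow_nonneg hx0 9)) (pow_nonneg h02 0)
  have hA : -(288/5 : ℝ) ≤ (-29403/512 : ℝ) + (9441/64 : ℝ) * x ^ 1 + (-22977/128 : ℝ) * x ^ 2 + (1981/4 : ℝ) * x ^ 3 + (-438 : ℝ) * x ^ 4 + (228 : ℝ) * x ^ 5 + (-55 : ℝ) * x ^ 6 + (91 : ℝ) * x ^ 7 + (-31 : ℝ) * x ^ 8 := by linarith [tL0, tL1, tL2, tL3, tL4, tL5, tL6, tL7, tL8]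
  have hE : (-29403/512 : ℝ) + (1836027/10240 : ℝ) * x ^ 1 + (-56439/200 : ℝ) * x ^ 2 + (8447819/12800 : ℝ) * x ^ 3 + (-56589/100 : ℝ) * x ^ 4 + (9789/25 : ℝ) * x ^ 5 + (-4681/25 : ℝ) * x ^ 6 + (2777/20 : ℝ) * x ^ 7 + (-31 : ℝ) * x ^ 8 + (899/100 : ℝ) * x ^ 9 ≤ -(117/5 : ℝ) := by linarith [tU0, tU1, tU2, tU3, tU4, tU5, tU6, tU7, tU8, tU9]
  have mlo_0_2 : (0:ℝ) ≤ x ^ 0 * (y x + 1) ^ 2 := mul_nonneg (pow_nonneg hx0 0) (pow_nonneg hv0 2)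
  have mhi_0_2 : x ^ 0 * (y x + 1) ^ 2 ≤ 0.2 ^ 0 * 0.058 ^ 2 := mul_le_mul (pow_le_pow_left₀ hx0 hx2 0) (pow_le_pow_left₀ hv0 hv058 2) (pow_nonneg hv0 2) (pow_nonneg (by norm_num) 0)
  have mlo_1_2 : (0:ℝ) ≤ x ^ 1 * (y x + 1) ^ 2 := mul_nonneg (pow_nonneg hx0 1) (pow_nonneg hv0 2)
  have mhi_1_2 : x ^ 1 * (y x + 1) ^ 2 ≤ 0.2 ^ 1 * 0.058 ^ 2 := mul_le_mul (pow_le_pow_left₀ hx0 hx2 1) (pow_le_pow_left₀ hv0 hv058 2) (pow_nonneg hv0 2) (pow_nonneg (by norm_num) 1)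
  have mlo_2_2 : (0:ℝ) ≤ x ^ 2 * (y x + 1) ^ 2 := mul_nonneg (pow_nonneg hx0 2) (pow_nonneg hv0 2)
  have mhi_2_2 : x ^ 2 * (y x + 1) ^ 2 ≤ 0.2 ^ 2 * 0.058 ^ 2 := mul_le_mul (pow_le_pow_left₀ hx0 hx2 2) (pow_le_pow_left₀ hv0 hv058 2) (pow_nonneg hv0 2) (pow_nonneg (by norm_num) 2)
  have mlo_3_2 : (0:ℝ) ≤ x ^ 3 * (y x + 1) ^ 2 := mul_nonneg (pow_nonneg hx0 3) (pow_nonneg hv0 2)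
  have mhi_3_2 : x ^ 3 * (y x + 1) ^ 2 ≤ 0.2 ^ 3 * 0.058 ^ 2 := mul_le_mul (pow_le_pow_left₀ hx0 hx2 3) (pow_le_pow_left₀ hv0 hv058 2) (pow_nonneg hv0 2) (pow_nonneg (by norm_num) 3)
  have mlo_4_2 : (0:ℝ) ≤ x ^ 4 * (y x + 1) ^ 2 := mul_nonneg (pow_nonneg hx0 4) (pow_nonneg hv0 2)
  have mhi_4_2 : x ^ 4 * (y x + 1) ^ 2 ≤ 0.2 ^ 4 * 0.058 ^ 2 := mul_le_mul (pow_le_pow_left₀ hx0 hx2 4) (pow_le_pow_left₀ hv0 hv058 2) (pow_nonneg hv0 2) (pow_nonneg (by norm_num) 4)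
  have mlo_5_2 : (0:ℝ) ≤ x ^ 5 * (y x + 1) ^ 2 := mul_nonneg (pow_nonneg hx0 5) (pow_nonneg hv0 2)
  have mhi_5_2 : x ^ 5 * (y x + 1) ^ 2 ≤ 0.2 ^ 5 * 0.058 ^ 2 := mul_le_mul (pow_le_pow_left₀ hx0 hx2 5) (pow_le_pow_left₀ hv0 hv058 2) (pow_nonneg hv0 2) (pow_nonneg (by norm_num) 5)
  have mlo_6_2 : (0:ℝ) ≤ x ^ 6 * (y x + 1) ^ 2 := mul_nonneg (pow_nonneg hx0 6) (pow_nonneg hv0 2)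
  have mhi_6_2 : x ^ 6 * (y x + 1) ^ 2 ≤ 0.2 ^ 6 * 0.058 ^ 2 := mul_le_mul (pow_le_pow_left₀ hx0 hx2 6) (pow_le_pow_left₀ hv0 hv058 2) (pow_nonneg hv0 2) (pow_nonneg (by norm_num) 6)
  have mlo_0_3 : (0:ℝ) ≤ x ^ 0 * (y x + 1) ^ 3 := mul_nonneg (pow_nonneg hx0 0) (pow_nonneg hv0 3)
  have mhi_0_3 : x ^ 0 * (y x + 1) ^ 3 ≤ 0.2 ^ 0 * 0.058 ^ 3 := mul_le_mul (pow_le_pow_left₀ hx0 hx2 0) (pow_le_pow_left₀ hv0 hv058 3) (pow_nonneg hv0 3) (pow_nonneg (by norm_num) 0)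
  have mlo_1_3 : (0:ℝ) ≤ x ^ 1 * (y x + 1) ^ 3 := mul_nonneg (pow_nonneg hx0 1) (pow_nonneg hv0 3)
  have mhi_1_3 : x ^ 1 * (y x + 1) ^ 3 ≤ 0.2 ^ 1 * 0.058 ^ 3 := mul_le_mul (pow_le_pow_left₀ hx0 hx2 1) (pow_le_pow_left₀ hv0 hv058 3) (pow_nonneg hv0 3) (pow_nonneg (by norm_num) 1)
  have mlo_2_3 : (0:ℝ) ≤ x ^ 2 * (y x + 1) ^ 3 := mul_nonneg (pow_nonneg hx0 2) (pow_nonneg hv0 3)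
  have mhi_2_3 : x ^ 2 * (y x + 1) ^ 3 ≤ 0.2 ^ 2 * 0.058 ^ 3 := mul_le_mul (pow_le_pow_left₀ hx0 hx2 2) (pow_le_pow_left₀ hv0 hv058 3) (pow_nonneg hv0 3) (pow_nonneg (by norm_num) 2)
  have mlo_3_3 : (0:ℝ) ≤ x ^ 3 * (y x + 1) ^ 3 := mul_nonneg (pow_nonneg hx0 3) (pow_nonneg hv0 3)
  have mhi_3_3 : x ^ 3 * (y x + 1) ^ 3 ≤ 0.2 ^ 3 * 0.058 ^ 3 := mul_le_mul (pow_le_pow_left₀ hx0 hx2 3) (pow_le_pow_left₀ hv0 hv058 3) (pow_nonneg hv0 3) (pow_nonneg (by norm_num) 3)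
  have mlo_4_3 : (0:ℝ) ≤ x ^ 4 * (y x + 1) ^ 3 := mul_nonneg (pow_nonneg hx0 4) (pow_nonneg hv0 3)
  have mhi_4_3 : x ^ 4 * (y x + 1) ^ 3 ≤ 0.2 ^ 4 * 0.058 ^ 3 := mul_le_mul (pow_le_pow_left₀ hx0 hx2 4) (pow_le_pow_left₀ hv0 hv058 3) (pow_nonneg hv0 3) (pow_nonneg (by norm_num) 4)
  have mlo_6_3 : (0:ℝ) ≤ x ^ 6 * (y x + 1) ^ 3 := mul_nonneg (pow_nonneg hx0 6) (pow_nonneg hv0 3)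
  have mhi_6_3 : x ^ 6 * (y x + 1) ^ 3 ≤ 0.2 ^ 6 * 0.058 ^ 3 := mul_le_mul (pow_le_pow_left₀ hx0 hx2 6) (pow_le_pow_left₀ hv0 hv058 3) (pow_nonneg hv0 3) (pow_nonneg (by norm_num) 6)
  have mlo_0_4 : (0:ℝ) ≤ x ^ 0 * (y x + 1) ^ 4 := mul_nonneg (pow_nonneg hx0 0) (pow_nonneg hv0 4)
  have mhi_0_4 : x ^ 0 * (y x + 1) ^ 4 ≤ 0.2 ^ 0 * 0.058 ^ 4 := mul_le_mul (pow_le_pow_left₀ hx0 hx2 0) (pow_le_pow_left₀ hv0 hv058 4) (pow_nonneg hv0 4) (pow_nonneg (by norm_num) 0)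
  have mlo_1_4 : (0:ℝ) ≤ x ^ 1 * (y x + 1) ^ 4 := mul_nonneg (pow_nonneg hx0 1) (pow_nonneg hv0 4)
  have mhi_1_4 : x ^ 1 * (y x + 1) ^ 4 ≤ 0.2 ^ 1 * 0.058 ^ 4 := mul_le_mul (pow_le_pow_left₀ hx0 hx2 1) (pow_le_pow_left₀ hv0 hv058 4) (pow_nonneg hv0 4) (pow_nonneg (by norm_num) 1)
  have mlo_2_4 : (0:ℝ) ≤ x ^ 2 * (y x + 1) ^ 4 := mul_nonneg (pow_nonneg hx0 2) (pow_nonneg hv0 4)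
  have mhi_2_4 : x ^ 2 * (y x + 1) ^ 4 ≤ 0.2 ^ 2 * 0.058 ^ 4 := mul_le_mul (pow_le_pow_left₀ hx0 hx2 2) (pow_le_pow_left₀ hv0 hv058 4) (pow_nonneg hv0 4) (pow_nonneg (by norm_num) 2)
  have mlo_3_4 : (0:ℝ) ≤ x ^ 3 * (y x + 1) ^ 4 := mul_nonneg (pow_nonneg hx0 3) (pow_nonneg hv0 4)
  have mhi_3_4 : x ^ 3 * (y x + 1) ^ 4 ≤ 0.2 ^ 3 * 0.058 ^ 4 := mul_le_mul (pow_le_pow_left₀ hx0 hx2 3) (pow_le_pow_left₀ hv0 hv058 4) (pow_nonneg hv0 4) (pow_nonneg (by norm_num) 3)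
  have mlo_4_4 : (0:ℝ) ≤ x ^ 4 * (y x + 1) ^ 4 := mul_nonneg (pow_nonneg hx0 4) (pow_nonneg hv0 4)
  have mhi_4_4 : x ^ 4 * (y x + 1) ^ 4 ≤ 0.2 ^ 4 * 0.058 ^ 4 := mul_le_mul (pow_le_pow_left₀ hx0 hx2 4) (pow_le_pow_left₀ hv0 hv058 4) (pow_nonneg hv0 4) (pow_nonneg (by norm_num) 4)
  have mlo_0_5 : (0:ℝ) ≤ x ^ 0 * (y x + 1) ^ 5 := mul_nonneg (pow_nonneg hx0 0) (pow_nonneg hv0 5)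
  have mhi_0_5 : x ^ 0 * (y x + 1) ^ 5 ≤ 0.2 ^ 0 * 0.058 ^ 5 := mul_le_mul (pow_le_pow_left₀ hx0 hx2 0) (pow_le_pow_left₀ hv0 hv058 5) (pow_nonneg hv0 5) (pow_nonneg (by norm_num) 0)
  have mlo_1_5 : (0:ℝ) ≤ x ^ 1 * (y x + 1) ^ 5 := mul_nonneg (pow_nonneg hx0 1) (pow_nonneg hv0 5)
  have mhi_1_5 : x ^ 1 * (y x + 1) ^ 5 ≤ 0.2 ^ 1 * 0.058 ^ 5 := mul_le_mul (pow_le_pow_left₀ hx0 hx2 1) (pow_le_pow_left₀ hv0 hv058 5) (pow_nonneg hv0 5) (pow_nonneg (by norm_num) 1)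
  have mlo_2_5 : (0:ℝ) ≤ x ^ 2 * (y x + 1) ^ 5 := mul_nonneg (pow_nonneg hx0 2) (pow_nonneg hv0 5)
  have mhi_2_5 : x ^ 2 * (y x + 1) ^ 5 ≤ 0.2 ^ 2 * 0.058 ^ 5 := mul_le_mul (pow_le_pow_left₀ hx0 hx2 2) (pow_le_pow_left₀ hv0 hv058 5) (pow_nonneg hv0 5) (pow_nonneg (by norm_num) 2)
  have mlo_4_5 : (0:ℝ) ≤ x ^ 4 * (y x + 1) ^ 5 := mul_nonneg (pow_nonneg hx0 4) (pow_nonneg hv0 5)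
  have mhi_4_5 : x ^ 4 * (y x + 1) ^ 5 ≤ 0.2 ^ 4 * 0.058 ^ 5 := mul_le_mul (pow_le_pow_left₀ hx0 hx2 4) (pow_le_pow_left₀ hv0 hv058 5) (pow_nonneg hv0 5) (pow_nonneg (by norm_num) 4)
  have mlo_0_6 : (0:ℝ) ≤ x ^ 0 * (y x + 1) ^ 6 := mul_nonneg (pow_nonneg hx0 0) (pow_nonneg hv0 6)
  have mhi_0_6 : x ^ 0 * (y x + 1) ^ 6 ≤ 0.2 ^ 0 * 0.058 ^ 6 := mul_le_mul (pow_le_pow_left₀ hx0 hx2 0) (pow_le_pow_left₀ hv0 hv058 6) (pow_nonneg hv0 6) (pow_nonneg (by norm_num) 0)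
  have mlo_1_6 : (0:ℝ) ≤ x ^ 1 * (y x + 1) ^ 6 := mul_nonneg (pow_nonneg hx0 1) (pow_nonneg hv0 6)
  have mhi_1_6 : x ^ 1 * (y x + 1) ^ 6 ≤ 0.2 ^ 1 * 0.058 ^ 6 := mul_le_mul (pow_le_pow_left₀ hx0 hx2 1) (pow_le_pow_left₀ hv0 hv058 6) (pow_nonneg hv0 6) (pow_nonneg (by norm_num) 1)
  have mlo_2_6 : (0:ℝ) ≤ x ^ 2 * (y x + 1) ^ 6 := mul_nonneg (pow_nonneg hx0 2) (pow_nonneg hv0 6)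
  have mhi_2_6 : x ^ 2 * (y x + 1) ^ 6 ≤ 0.2 ^ 2 * 0.058 ^ 6 := mul_le_mul (pow_le_pow_left₀ hx0 hx2 2) (pow_le_pow_left₀ hv0 hv058 6) (pow_nonneg hv0 6) (pow_nonneg (by norm_num) 2)
  have mlo_0_7 : (0:ℝ) ≤ x ^ 0 * (y x + 1) ^ 7 := mul_nonneg (pow_nonneg hx0 0) (pow_nonneg hv0 7)
  have mhi_0_7 : x ^ 0 * (y x + 1) ^ 7 ≤ 0.2 ^ 0 * 0.058 ^ 7 := mul_le_mul (pow_le_pow_left₀ hx0 hx2 0) (pow_le_pow_left₀ hv0 hv058 7) (pow_nonneg hv0 7) (pow_nonneg (by norm_num) 0)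
  have mlo_2_7 : (0:ℝ) ≤ x ^ 2 * (y x + 1) ^ 7 := mul_nonneg (pow_nonneg hx0 2) (pow_nonneg hv0 7)
  have mhi_2_7 : x ^ 2 * (y x + 1) ^ 7 ≤ 0.2 ^ 2 * 0.058 ^ 7 := mul_le_mul (pow_le_pow_left₀ hx0 hx2 2) (pow_le_pow_left₀ hv0 hv058 7) (pow_nonneg hv0 7) (pow_nonneg (by norm_num) 2)
  have mlo_0_8 : (0:ℝ) ≤ x ^ 0 * (y x + 1) ^ 8 := mul_nonneg (pow_nonneg hx0 0) (pow_nonneg hv0 8)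
  have mhi_0_8 : x ^ 0 * (y x + 1) ^ 8 ≤ 0.2 ^ 0 * 0.058 ^ 8 := mul_le_mul (pow_le_pow_left₀ hx0 hx2 0) (pow_le_pow_left₀ hv0 hv058 8) (pow_nonneg hv0 8) (pow_nonneg (by norm_num) 0)
  have mlo_0_9 : (0:ℝ) ≤ x ^ 0 * (y x + 1) ^ 9 := mul_nonneg (pow_nonneg hx0 0) (pow_nonneg hv0 9)
  have mhi_0_9 : x ^ 0 * (y x + 1) ^ 9 ≤ 0.2 ^ 0 * 0.058 ^ 9 := mul_le_mul (pow_le_pow_left₀ hx0 hx2 0) (pow_le_pow_left₀ hv0 hv058 9) (pow_nonneg hv0 9) (pow_nonneg (by norm_num) 0)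
  have hD8 : iteratedDeriv 8 y x = (45 : ℝ) * y x ^ 1 + (189/16 : ℝ) * y x ^ 5 + (315/512 : ℝ) * y x ^ 9 + (531/4 : ℝ) * (x ^ 1 * y x ^ 2) + (945/64 : ℝ) * (x ^ 1 * y x ^ 6) + (1377/8 : ℝ) * (x ^ 2 * y x ^ 3) + (945/128 : ℝ) * (x ^ 2 * y x ^ 7) + (385 : ℝ) * x ^ 3 + (441/4 : ℝ) * (x ^ 3 * y x ^ 4) + (813/2 : ℝ) * (x ^ 4 * y x ^ 1) + (63/2 : ℝ) * (x ^ 4 * y x ^ 5) + (228 : ℝ) * (x ^ 5 * y x ^ 2) + (55 : ℝ) * (x ^ 6 * y x ^ 3) + (91 : ℝ) * x ^ 7 + (31 : ℝ) * (x ^ 8 * y x ^ 1) := e8 x (hsub hx)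
  rw [hD8]
  constructor
  · linarith [hA, hvB0, mlo_0_2, mhi_0_2, mlo_1_2, mhi_1_2, mlo_2_2, mhi_2_2, mlo_3_2, mhi_3_2, mlo_4_2, mhi_4_2, mlo_5_2, mhi_5_2, mlo_6_2, mhi_6_2, mlo_0_3, mhi_0_3, mlo_1_3, mhi_1_3, mlo_2_3, mhi_2_3, mlo_3_3, mhi_3_3, mlo_4_3, mhi_4_3, mlo_6_3, mhi_6_3, mlo_0_4, mhi_0_4, mlo_1_4, mhi_1_4, mlo_2_4, mhi_2_4, mlo_3_4, mhi_3_4, mlo_4_4, mhi_4_4, mlo_0_5, mhi_0_5, mlo_1_5, mhi_1_5, mlo_2_5, mhi_2_5, mlo_4_5, mhi_4_5, mlo_0_6, mhi_0_6, mlo_1_6, mhi_1_6, mlo_2_6, mhi_2_6, mlo_0_7, mhi_0_7, mlo_2_7, mhi_2_7, mlo_0_8, mhi_0_8, mlo_0_9, mhi_0_9]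
  · linarith [hE, hvB, mlo_0_2, mhi_0_2, mlo_1_2, mhi_1_2, mlo_2_2, mhi_2_2, mlo_3_2, mhi_3_2, mlo_4_2, mhi_4_2, mlo_5_2, mhi_5_2, mlo_6_2, mhi_6_2, mlo_0_3, mhi_0_3, mlo_1_3, mhi_1_3, mlo_2_3, mhi_2_3, mlo_3_3, mhi_3_3, mlo_4_3, mhi_4_3, mlo_6_3, mhi_6_3, mlo_0_4, mhi_0_4, mlo_1_4, mhi_1_4, mlo_2_4, mhi_2_4, mlo_3_4, mhi_3_4, mlo_4_4, mhi_4_4, mlo_0_5, mhi_0_5, mlo_1_5, mhi_1_5, mlo_2_5, mhi_2_5, mlo_4_5, mhi_4_5, mlo_0_6, mhi_0_6, mlo_1_6, mhi_1_6, mlo_2_6, mhi_2_6, mlo_0_7, mhi_0_7, mlo_2_7, mhi_2_7, mlo_0_8, mhi_0_8, mlo_0_9, mhi_0_9]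
end

section
/- There exists a function y : ℝ → ℝ that is analytic at every point of the open ball of radius 0.27 centered at 0, satisfies y(0) = −1, and satisfies y'(x) = x² + y(x)²/4 for every x with |x| < 0.27. -/
open Filter FormalMultilinearSeries
open scoped NNReal ENNReal

namespace RiccatiAux

noncomputable def a : ℕ → ℝ
  | 0 => 1
  | 1 => 1/4
  | 2 => 0
  | 3 => 0
  | (n+4) => -a n / (4 * ((n:ℝ)+4) * ((n:ℝ)+3))

lemma a_zero : a 0 = 1 := rfl
lemma a_one : a 1 = 1/4 := rfl
lemma a_two : a 2 = 0 := rfl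
lemma a_three : a 3 = 0 := rfl
lemma a_add4 (n : ℕ) : a (n+4) = -a n / (4 * ((n:ℝ)+4) * ((n:ℝ)+3)) := rfl

lemma abs_a : ∀ n, |a n| ≤ (1/2)^n := by
  intro n
  induction n using a.induct with
  | case1 => norm_num [a_zero]
  | case2 => rw [a_one]; norm_num [abs_of_nonneg]
  | case3 => norm_num [a_two]
  | case4 => norm_num [a_three]
  | case5 n ih =>
    rw [a_add4, abs_div, abs_neg]
    have h1 : (0:ℝ) < 4 * ((n:ℝ)+4) * ((n:ℝ)+3) := by positivity
    have h2 : (16:ℝ) ≤ 4 * ((n:ℝ)+4) * ((n:ℝ)+3) := by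
      nlinarith [Nat.cast_nonneg (α := ℝ) n]
    rw [abs_of_pos h1]
    calc |a n| / (4 * ((n:ℝ)+4) * ((n:ℝ)+3)) ≤ (1/2)^n / 16 :=
          div_le_div₀ (by positivity) ih (by norm_num) h2
      _ ≤ (1/2)^(n+4) := by rw [pow_add]; rw [div_eq_mul_inv]; norm_num

/-- termwise derivative of a coefficient sequence. -/
noncomputable def D (c : ℕ → ℝ) : ℕ → ℝ := fun n => ((n:ℝ)+1) * c (n+1)

noncomputable def M : ℝ := ∑' n : ℕ, ((n:ℝ)+1) * (9/10)^n

lemma summable_M : Summable (fun n : ℕ => ((n:ℝ)+1) * (9/10)^n) := by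
  have h1 : Summable (fun n : ℕ => (n:ℝ) * (9/10)^n) := by
    simpa using summable_pow_mul_geometric_of_norm_lt_one (R := ℝ) 1
      (r := 9/10) (by norm_num [abs_of_nonneg])
  have h2 : Summable (fun n : ℕ => ((9:ℝ)/10)^n) :=
    summable_geometric_of_lt_one (by norm_num) (by norm_num)
  exact (h1.add h2).congr (fun n => by ring)

lemma one_le_M : 1 ≤ M := by
  have := Summable.le_tsum summable_M 0 (fun n _ => by positivity)
  simpa [M] using this

lemma nat_le_M (n : ℕ) : ((n:ℝ)+1) ≤ M * (10/9)^n := by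
  have h : ((n:ℝ)+1) * (9/10)^n ≤ M := Summable.le_tsum summable_M n (fun m _ => by positivity)
  have h9 : (0:ℝ) < (9/10)^n := by positivity
  have key : ((n:ℝ)+1) ≤ M / (9/10)^n := (le_div_iff₀ h9).mpr h
  calc ((n:ℝ)+1) ≤ M / (9/10)^n := key
    _ = M * (10/9)^n := by
        rw [div_eq_mul_inv, ← inv_pow]
        norm_num

lemma D_bound {c : ℕ → ℝ} {C q : ℝ} (hC : 0 ≤ C) (hq : 0 < q)
    (hc : ∀ n, |c n| ≤ C * q^n) (n : ℕ) :
    |D c n| ≤ (C * q * M) * (10/9 * q)^n := by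
  have h1 : |D c n| = ((n:ℝ)+1) * |c (n+1)| := by
    rw [D, abs_mul, abs_of_nonneg (by positivity)]
  rw [h1]
  calc ((n:ℝ)+1) * |c (n+1)| ≤ (M * (10/9)^n) * (C * q^(n+1)) := by
        have hM : (0:ℝ) ≤ M * (10/9)^n := by
          have := one_le_M
          positivity
        exact mul_le_mul (nat_le_M n) (hc (n+1)) (abs_nonneg _) hM
    _ = (C * q * M) * (10/9 * q)^n := by rw [pow_succ, mul_pow]; ring

/-- sum of the power series with coefficients `c`. -/
noncomputable def S (c : ℕ → ℝ) : ℝ → ℝ := fun x => ∑' n, c n * x^n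

lemma summable_S {c : ℕ → ℝ} {C q : ℝ} (hC : 0 ≤ C) (hq : 0 ≤ q) (hq' : q ≤ 3/4)
    (hc : ∀ n, |c n| ≤ C * q^n) {x : ℝ} (hx : |x| ≤ 1) :
    Summable (fun n => c n * x^n) := by
  apply Summable.of_norm_bounded (g := fun n => C * (3/4)^n)
    ((summable_geometric_of_lt_one (by norm_num) (by norm_num)).mul_left C)
  intro n
  rw [Real.norm_eq_abs, abs_mul, abs_pow]
  calc |c n| * |x|^n ≤ (C * q^n) * 1^n := by
        exact mul_le_mul (hc n) (pow_le_pow_left₀ (abs_nonneg x) hx n) (by positivity)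
          (mul_nonneg hC (pow_nonneg hq n))
    _ ≤ C * (3/4)^n := by
        rw [one_pow, mul_one]
        exact mul_le_mul_of_nonneg_left (pow_le_pow_left₀ hq hq' n) hC

lemma sum_ofScalars (c : ℕ → ℝ) : (ofScalars ℝ c).sum = S c := by
  funext x
  rw [FormalMultilinearSeries.sum, S]
  exact tsum_congr fun n => by rw [ofScalars_apply_eq, smul_eq_mul]

lemma analytic_S {c : ℕ → ℝ} {C q : ℝ} (hC : 0 ≤ C) (hq : 0 ≤ q) (hq' : q ≤ 3/4)
    (hc : ∀ n, |c n| ≤ C * q^n) {x : ℝ} (hx : |x| < 1) :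
    AnalyticAt ℝ (S c) x := by
  have hrad : (1 : ℝ≥0) ≤ (ofScalars ℝ c).radius := by
    apply le_radius_of_bound _ C
    intro n
    rw [ofScalars_norm]
    norm_num
    calc ‖c n‖ ≤ C * q^n := hc n
      _ ≤ C * 1 := by
          apply mul_le_mul_of_nonneg_left _ hC
          exact pow_le_one₀ hq (by linarith)
      _ = C := mul_one C
  have hpos : 0 < (ofScalars ℝ c).radius := lt_of_lt_of_le (by norm_num) hrad
  have hball := (ofScalars ℝ c).hasFPowerSeriesOnBall hpos
  have hana := hball.analyticOnNhd
  rw [sum_ofScalars] at hana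
  apply hana
  rw [EMetric.mem_ball, edist_zero_right]
  calc (‖x‖₊ : ℝ≥0∞) < (1 : ℝ≥0) := by
        rw [ENNReal.coe_lt_coe, ← NNReal.coe_lt_coe, coe_nnnorm, Real.norm_eq_abs]
        exact_mod_cast hx
    _ ≤ (ofScalars ℝ c).radius := hrad

lemma hasDerivAt_S {c : ℕ → ℝ} {C q : ℝ} (hC : 0 ≤ C) (hq : 0 < q) (hq' : q ≤ 3/4)
    (hc : ∀ n, |c n| ≤ C * q^n) {x : ℝ} (hx : |x| < 1/2) :
    HasDerivAt (S c) (S (D c) x) x := by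
  have hM := one_le_M
  have hDc := D_bound hC hq hc
  have hCM : (0:ℝ) ≤ C * q * M := by positivity
  have hmem : ∀ z : ℝ, |z| < 1/2 → z ∈ Metric.ball (0:ℝ) (1/2) := by
    intro z hz
    simpa [Real.dist_eq] using hz
  have hu : Summable (fun n : ℕ => if n = 0 then (0:ℝ) else (C*q*M) * (5/9*q)^(n-1)) := by
    rw [← summable_nat_add_iff 1]
    simp only [Nat.add_sub_cancel, Nat.add_eq_zero, one_ne_zero, and_false, if_false]
    exact (summable_geometric_of_lt_one (by positivity) (by nlinarith)).mul_left (C*q*M)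
  have hg : ∀ (n : ℕ) (z : ℝ), z ∈ Metric.ball (0:ℝ) (1/2) →
      HasDerivAt (fun w => c n * w^n) ((n:ℝ) * c n * z^(n-1)) z := by
    intro n z _
    have h : HasDerivAt (fun w => c n * w^n) _ z := (hasDerivAt_pow n z).const_mul (c n)
    convert h using 1
    ring
  have hg' : ∀ (n : ℕ) (z : ℝ), z ∈ Metric.ball (0:ℝ) (1/2) →
      ‖(n:ℝ) * c n * z^(n-1)‖ ≤ (if n = 0 then (0:ℝ) else (C*q*M) * (5/9*q)^(n-1)) := by
    intro n z hz
    have hz' : |z| ≤ 1/2 := by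
      rw [Metric.mem_ball, Real.dist_eq, sub_zero] at hz
      linarith
    match n with
    | 0 => simp
    | (m+1) =>
      simp only [Nat.add_sub_cancel, Nat.add_eq_zero, one_ne_zero, and_false, if_false]
      have e1 : ((m+1:ℕ):ℝ) * c (m+1) * z^m = D c m * z^m := by
        rw [D]; push_cast; ring
      rw [e1, Real.norm_eq_abs, abs_mul, abs_pow]
      calc |D c m| * |z|^m ≤ ((C*q*M) * (10/9*q)^m) * (1/2)^m := by
            apply mul_le_mul (hDc m) (pow_le_pow_left₀ (abs_nonneg z) hz' m)
              (by positivity) (by positivity)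
        _ = (C*q*M) * (5/9*q)^m := by
            rw [mul_assoc, ← mul_pow]
            have : ((10:ℝ)/9*q * (1/2)) = 5/9*q := by ring
            rw [this]
  have hg0 : Summable fun n => c n * (0:ℝ)^n :=
    summable_S hC hq.le hq' hc (by norm_num)
  have H := hasDerivAt_tsum_of_isPreconnected hu Metric.isOpen_ball
    (convex_ball (0:ℝ) (1/2)).isPreconnected hg hg' (hmem 0 (by norm_num)) hg0 (hmem x hx)
  have hsum : Summable (fun n : ℕ => (n:ℝ) * c n * x^(n-1)) :=
    Summable.of_norm_bounded hu (fun n => hg' n x (hmem x hx))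
  have hval : S (D c) x = ∑' n : ℕ, (n:ℝ) * c n * x^(n-1) := by
    rw [Summable.tsum_eq_zero_add hsum, S]
    simp only [Nat.cast_zero, zero_mul, Nat.add_sub_cancel, zero_add]
    apply tsum_congr
    intro n
    rw [D]
    push_cast
    ring
  rw [hval]
  exact H

/-! Instantiations for the coefficients `a`, `D a`, `D (D a)`. -/

lemma bound_a : ∀ n, |a n| ≤ 1 * (1/2:ℝ)^n := fun n => by simpa using abs_a n

lemma bound_Da : ∀ n, |D a n| ≤ (1 * (1/2) * M) * (10/9 * (1/2):ℝ)^n :=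
  D_bound (by norm_num) (by norm_num) bound_a

lemma bound_DDa : ∀ n, |D (D a) n| ≤
    ((1 * (1/2) * M) * (10/9 * (1/2)) * M) * (10/9 * (10/9 * (1/2)):ℝ)^n :=
  D_bound (by have := one_le_M; positivity) (by norm_num) bound_Da

lemma C1_nonneg : (0:ℝ) ≤ 1 * (1/2) * M := by have := one_le_M; positivity
lemma C2_nonneg : (0:ℝ) ≤ (1 * (1/2) * M) * (10/9 * (1/2)) * M := by
  have := one_le_M; positivity

lemma summable_a {x : ℝ} (hx : |x| ≤ 1) : Summable fun n => a n * x^n :=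
  summable_S (by norm_num) (by norm_num) (by norm_num) bound_a hx

lemma summable_DDa {x : ℝ} (hx : |x| ≤ 1) : Summable fun n => D (D a) n * x^n :=
  summable_S C2_nonneg (by norm_num) (by norm_num) bound_DDa hx

lemma analytic_a {x : ℝ} (hx : |x| < 1) : AnalyticAt ℝ (S a) x :=
  analytic_S (by norm_num) (by norm_num) (by norm_num) bound_a hx

lemma analytic_Da {x : ℝ} (hx : |x| < 1) : AnalyticAt ℝ (S (D a)) x :=
  analytic_S C1_nonneg (by norm_num) (by norm_num) bound_Da hx

lemma hasDerivAt_a {x : ℝ} (hx : |x| < 1/2) : HasDerivAt (S a) (S (D a) x) x :=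
  hasDerivAt_S (by norm_num) (by norm_num) (by norm_num) bound_a hx

lemma hasDerivAt_Da {x : ℝ} (hx : |x| < 1/2) : HasDerivAt (S (D a)) (S (D (D a)) x) x :=
  hasDerivAt_S C1_nonneg (by norm_num) (by norm_num) bound_Da hx

/-! Nonvanishing of `S a` on the relevant interval. -/

lemma Sa_ne {x : ℝ} (hx : |x| ≤ 3/10) : S a x ≠ 0 := by
  have hx1 : |x| ≤ 1 := by linarith
  have hsum := summable_a hx1
  have h0 : S a x = 1 + ∑' n, a (n+1) * x^(n+1) := by
    rw [S, Summable.tsum_eq_zero_add hsum, a_zero]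
    norm_num
  have hgeom : HasSum (fun n : ℕ => (3/20) * (3/20:ℝ)^n) ((3/20) * (1 - 3/20)⁻¹) :=
    (hasSum_geometric_of_lt_one (by norm_num) (by norm_num)).mul_left (3/20)
  have hR : |∑' n, a (n+1) * x^(n+1)| ≤ (3/20) * (1 - 3/20)⁻¹ := by
    rw [← Real.norm_eq_abs]
    apply tsum_of_norm_bounded hgeom
    intro n
    rw [Real.norm_eq_abs, abs_mul, abs_pow]
    calc |a (n+1)| * |x|^(n+1) ≤ (1/2)^(n+1) * (3/10)^(n+1) := by
          apply mul_le_mul (abs_a (n+1)) (pow_le_pow_left₀ (abs_nonneg x) hx (n+1))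
            (by positivity) (by positivity)
      _ = (3/20) * (3/20)^n := by
          rw [← mul_pow]
          norm_num
          rw [pow_succ]
          ring
  intro h
  rw [h] at h0
  have : |∑' n, a (n+1) * x^(n+1)| = 1 := by
    rw [show ∑' n, a (n+1) * x^(n+1) = -1 by linarith]
    norm_num
  rw [this] at hR
  norm_num at hR

/-! The second-order ODE satisfied by the series. -/

set_option maxHeartbeats 1000000 in
lemma DD_identity {x : ℝ} (hx : |x| ≤ 1) : S (D (D a)) x = -x^2/4 * S a x := by
  have h1 : Summable (fun n => D (D a) n * x^n) := summable_DDa hx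
  have h2 : Summable (fun n : ℕ => D (D a) (n+1) * x^(n+1)) :=
    (summable_nat_add_iff 1).mpr h1
  rw [S, Summable.tsum_eq_zero_add h1, Summable.tsum_eq_zero_add h2]
  have e0 : D (D a) 0 * x^0 = 0 := by
    simp [D, a_two]
  have e1 : D (D a) (0+1) * x^(0+1) = 0 := by
    simp [D, a_three]
  rw [e0, e1]
  have e2 : ∀ n : ℕ, D (D a) (n+1+1) * x^(n+1+1) = -x^2/4 * (a n * x^n) := by
    intro n
    have harg : n+1+1+1+1 = n+4 := by omega
    have hD : D (D a) (n+1+1) = ((n:ℝ)+3) * (((n:ℝ)+4) * a (n+4)) := by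
      simp only [D, harg]
      push_cast
      ring
    rw [hD, a_add4]
    have h4 : ((n:ℝ)+4) ≠ 0 := by positivity
    have h3 : ((n:ℝ)+3) ≠ 0 := by positivity
    have hx2 : x^(n+1+1) = x^n * x^2 := by rw [pow_add]; ring
    rw [hx2]
    field_simp
  have e3 : ∑' n : ℕ, D (D a) (n+1+1) * x^(n+1+1) = -x^2/4 * ∑' n, a n * x^n := by
    rw [tsum_congr e2, tsum_mul_left]
  rw [e3, S]
  ring

/-! Values at zero. -/

lemma Sa_zero : S a 0 = 1 := by
  rw [S, tsum_eq_single 0 (fun n hn => by simp [zero_pow hn])]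
  simp [a_zero]

lemma SDa_zero : S (D a) 0 = 1/4 := by
  rw [S, tsum_eq_single 0 (fun n hn => by simp [zero_pow hn])]
  simp [D, a_one]

end RiccatiAux

open RiccatiAux

/-- There exists a function `y : ℝ → ℝ`, analytic at every point of the open
ball of radius `0.27` about `0`, with `y 0 = -1`, satisfying
`y' x = x² + y(x)²/4` for every `x` with `|x| < 0.27`. -/
theorem riccati_analytic_solution :
    ∃ y : ℝ → ℝ,
      (∀ x ∈ Metric.ball (0 : ℝ) 0.27, AnalyticAt ℝ y x) ∧
      y 0 = -1 ∧
      ∀ x : ℝ, |x| < 0.27 → HasDerivAt y (x ^ 2 + (y x) ^ 2 / 4) x := by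
  refine ⟨fun x => -4 * S (D a) x / S a x, ?_, ?_, ?_⟩
  · intro x hx
    rw [Metric.mem_ball, Real.dist_eq, sub_zero] at hx
    have hx1 : |x| < 1 := by
      rw [show (0.27:ℝ) = 27/100 by norm_num] at hx
      linarith
    have hx3 : |x| ≤ 3/10 := by
      rw [show (0.27:ℝ) = 27/100 by norm_num] at hx
      linarith
    exact ((analyticAt_const.mul (analytic_Da hx1)).div (analytic_a hx1) (Sa_ne hx3))
  · show -4 * S (D a) 0 / S a 0 = -1
    rw [Sa_zero, SDa_zero]
    norm_num
  · intro x hx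
    rw [show (0.27:ℝ) = 27/100 by norm_num] at hx
    have hx2 : |x| < 1/2 := by linarith
    have hx3 : |x| ≤ 3/10 := by linarith
    have hx1 : |x| ≤ 1 := by linarith
    have hu' := hasDerivAt_a hx2
    have hv' := hasDerivAt_Da hx2
    have hne := Sa_ne hx3
    have H : HasDerivAt (fun x => -4 * S (D a) x / S a x) _ x := (hv'.const_mul (-4:ℝ)).div hu' hne
    convert H using 1
    show x ^ 2 + (-4 * S (D a) x / S a x) ^ 2 / 4 = _
    rw [DD_identity hx1]
    have h2 : S a x ≠ 0 := hne
    field_simp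
    ring
end

section
/- Let y : ℝ → ℝ be infinitely differentiable on an open interval containing [0, 0.4], satisfying y(0) = 1 and 4·y'(x) = x + y(x)² there. Define the polynomial p(x) := 1 + (1/4)x + (3/16)x² + (7/192)x³ + (1/96)x⁴ + (1/200)x⁵. Then for every x in [0, 0.4], |y(x) − p(x)| ≤ 2·10⁻⁵. -/
open Set Real

private lemma exp_le_one_div (x : ℝ) (h : x < 1) : Real.exp x ≤ 1/(1-x) := by
  have h1 : 1 - x ≤ Real.exp (-x) := by
    have := Real.add_one_le_exp (-x); linarith
  have h2 : Real.exp (-x) = (Real.exp x)⁻¹ := Real.exp_neg x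
  have h3 : (0:ℝ) < Real.exp x := Real.exp_pos x
  rw [le_div_iff₀ (by linarith)]
  rw [h2] at h1
  have h4 := mul_le_mul_of_nonneg_left h1 h3.le
  rw [mul_inv_cancel₀ h3.ne'] at h4
  nlinarith

private lemma gb_le {δ ε x h : ℝ} (hδ : 0 ≤ δ) (hε : 0 ≤ ε) (hx0 : 0 ≤ x) (hx : x ≤ h)
    (hh : (13/20)*h < 1) :
    gronwallBound δ (13/20) ε x ≤ (δ + ε*h)/(1-(13/20)*h) := by
  rw [gronwallBound_of_K_ne_0 (by norm_num : (13/20:ℝ) ≠ 0)]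
  have hX : Real.exp ((13/20)*x) ≤ 1/(1-(13/20)*h) := by
    refine le_trans (Real.exp_le_exp.2 (by nlinarith)) (exp_le_one_div _ hh)
  have h1 : (0:ℝ) < 1 - (13/20)*h := by linarith
  have h2 : (1:ℝ) ≤ Real.exp ((13/20)*x) := Real.one_le_exp (by positivity)
  show δ * Real.exp ((13/20)*x) + ε / (13/20) * (Real.exp ((13/20)*x) - 1)
      ≤ (δ + ε*h)/(1-(13/20)*h)
  have a1 : Real.exp ((13/20)*x) * (1-(13/20)*h) ≤ 1 := (le_div_iff₀ h1).1 hX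
  have t1 := mul_le_mul_of_nonneg_left a1 hδ
  have t2 := mul_le_mul_of_nonneg_left a1 (show (0:ℝ) ≤ ε/(13/20) by positivity)
  rw [le_div_iff₀ h1]
  nlinarith [t1, t2]

private lemma defect_bound (t b : ℝ) (ht : 0 ≤ t) (htb : t ≤ b) (hb : b ≤ 2/5) :
    |(1/4 + 3/8*t + 7/64*t^2 + 1/24*t^3 + 1/40*t^4)
      - (t + (1 + (1/4)*t + (3/16)*t^2 + (7/192)*t^3 + (1/96)*t^4 + (1/200)*t^5)^2)/4|
      ≤ 33/5120*b^4 - 1109/153600*b^5 := by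
  have hb0 : (0:ℝ) ≤ b := le_trans ht htb
  have h5 : t^5 ≤ (2/5)*t^4 := by nlinarith [pow_nonneg ht 4]
  have h6 : t^6 ≤ (2/5)*t^5 := by nlinarith [pow_nonneg ht 5]
  have h7 : t^7 ≤ (2/5)*t^6 := by nlinarith [pow_nonneg ht 6]
  have h8 : t^8 ≤ (2/5)*t^7 := by nlinarith [pow_nonneg ht 7]
  have h9 : t^9 ≤ (2/5)*t^8 := by nlinarith [pow_nonneg ht 8]
  have h10 : t^10 ≤ (2/5)*t^9 := by nlinarith [pow_nonneg ht 9]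
  have hm : 33/5120*t^4 - 1109/153600*t^5 ≤ 33/5120*b^4 - 1109/153600*b^5 := by
    nlinarith [mul_nonneg (sub_nonneg.2 htb) (pow_nonneg ht 3),
      mul_nonneg (sub_nonneg.2 htb) (pow_nonneg hb0 3),
      mul_nonneg (mul_nonneg (sub_nonneg.2 htb) ht) (pow_nonneg hb0 2),
      mul_nonneg (mul_nonneg (sub_nonneg.2 htb) hb0) (pow_nonneg ht 2),
      mul_nonneg (sub_nonneg.2 hb) (mul_nonneg (sub_nonneg.2 htb) (pow_nonneg hb0 3)),
      mul_nonneg (sub_nonneg.2 hb) (mul_nonneg (sub_nonneg.2 htb) (pow_nonneg ht 3)),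
      mul_nonneg (sub_nonneg.2 hb) (mul_nonneg (mul_nonneg (sub_nonneg.2 htb) hb0) (pow_nonneg ht 2)),
      mul_nonneg (sub_nonneg.2 hb) (mul_nonneg (mul_nonneg (sub_nonneg.2 htb) ht) (pow_nonneg hb0 2))]
  rw [abs_le]
  constructor
  · nlinarith [pow_nonneg ht 4, pow_nonneg ht 5, pow_nonneg ht 6, pow_nonneg ht 7,
      pow_nonneg ht 8, pow_nonneg ht 9, pow_nonneg ht 10]
  · nlinarith [pow_nonneg ht 5, pow_nonneg ht 6, pow_nonneg ht 7, pow_nonneg ht 8,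
      pow_nonneg ht 9, pow_nonneg ht 10]

/-- If `y` is infinitely differentiable on an open interval containing
`[0, 0.4]`, with `y 0 = 1` and `4·y' x = x + y(x)²` there, then the polynomial
`p x = 1 + (1/4)x + (3/16)x² + (7/192)x³ + (1/96)x⁴ + (1/200)x⁵` approximates
`y` on `[0, 0.4]` with error at most `2·10⁻⁵`. -/
theorem riccati_second_example_accuracy (y : ℝ → ℝ) (s : Set ℝ) (hs : IsOpen s)
    (hsub : Set.Icc (0 : ℝ) 0.4 ⊆ s) (hsmooth : ContDiffOn ℝ (⊤ : ℕ∞) y s)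
    (h0 : y 0 = 1)
    (hde : ∀ x ∈ s, HasDerivAt y ((x + (y x) ^ 2) / 4) x)
    (p : ℝ → ℝ)
    (hp : ∀ x : ℝ, p x = 1 + (1 / 4) * x + (3 / 16) * x ^ 2 + (7 / 192) * x ^ 3
      + (1 / 96) * x ^ 4 + (1 / 200) * x ^ 5) :
    ∀ x ∈ Set.Icc (0 : ℝ) 0.4, |y x - p x| ≤ 2 / 10 ^ 5 := by
  have h04 : (0.4 : ℝ) = 2/5 := by norm_num
  rw [h04] at hsub ⊢
  -- continuity of y on the interval
  have hcont : ContinuousOn y (Icc (0:ℝ) (2/5)) := fun x hx =>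
    ((hde x (hsub hx)).continuousAt).continuousWithinAt
  -- lower bound: y is monotone, so y x ≥ 1
  have hlow : ∀ x ∈ Icc (0:ℝ) (2/5), 1 ≤ y x := by
    have hmono : MonotoneOn y (Icc (0:ℝ) (2/5)) := by
      apply monotoneOn_of_deriv_nonneg (convex_Icc _ _) hcont
      · intro x hx
        rw [interior_Icc] at hx
        exact ((hde x (hsub (Ioo_subset_Icc_self hx))).differentiableAt).differentiableWithinAt
      · intro x hx
        rw [interior_Icc] at hx
        rw [(hde x (hsub (Ioo_subset_Icc_self hx))).deriv]
        have h1 : (0:ℝ) < x := hx.1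
        positivity
    intro x hx
    have := hmono (left_mem_Icc.2 (by norm_num)) hx hx.1
    rw [h0] at this; exact this
  -- upper bound: y x ≤ 13/10
  have hup : ∀ x ∈ Icc (0:ℝ) (2/5), y x ≤ 13/10 := by
    by_contra hcon
    push_neg at hcon
    obtain ⟨z, hz, hzgt⟩ := hcon
    set A : Set ℝ := Icc (0:ℝ) (2/5) ∩ y ⁻¹' (Ici (13/10)) with hA
    have hAne : A.Nonempty := ⟨z, hz, le_of_lt hzgt⟩
    have hAclosed : IsClosed A :=
      hcont.preimage_isClosed_of_isClosed isClosed_Icc isClosed_Ici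
    have hAbdd : BddBelow A := ⟨0, fun t ht => ht.1.1⟩
    set x₀ := sInf A with hx₀def
    have hx₀A : x₀ ∈ A := hAclosed.csInf_mem hAne hAbdd
    have hx₀Icc : x₀ ∈ Icc (0:ℝ) (2/5) := hx₀A.1
    have hyx₀ : 13/10 ≤ y x₀ := hx₀A.2
    have hx₀pos : 0 < x₀ := by
      rcases lt_or_eq_of_le hx₀Icc.1 with h | h
      · exact h
      · exfalso; rw [← h] at hyx₀; rw [h0] at hyx₀; norm_num at hyx₀
    have hlt : ∀ t, 0 ≤ t → t < x₀ → y t < 13/10 := by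
      intro t ht0 htx
      by_contra hge
      push_neg at hge
      have htA : t ∈ A := ⟨⟨ht0, le_trans htx.le hx₀Icc.2⟩, hge⟩
      exact absurd (csInf_le hAbdd htA) (not_le.2 htx)
    have hyx₀le : y x₀ ≤ 13/10 := by
      have hct : ContinuousAt y x₀ := (hde x₀ (hsub hx₀Icc)).continuousAt
      refine le_of_tendsto (hct.tendsto.mono_left nhdsWithin_le_nhds :
        Filter.Tendsto y (nhdsWithin x₀ (Iio x₀)) (nhds (y x₀))) ?_
      filter_upwards [Ioo_mem_nhdsLT_of_mem (⟨hx₀pos, le_refl x₀⟩ : x₀ ∈ Ioc 0 x₀)] with t ht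
      exact (hlt t ht.1.le ht.2).le
    have hble : ∀ t ∈ Icc 0 x₀, y t ≤ 13/10 := by
      intro t ht
      rcases lt_or_eq_of_le ht.2 with h | h
      · exact (hlt t ht.1 h).le
      · rw [h]; exact hyx₀le
    have hsubIcc : Icc (0:ℝ) x₀ ⊆ Icc (0:ℝ) (2/5) := Icc_subset_Icc le_rfl hx₀Icc.2
    have key : ‖y x₀ - y 0‖ ≤ (209/400) * ‖x₀ - 0‖ := by
      refine Convex.norm_image_sub_le_of_norm_hasDerivWithin_le
        (f' := fun t => (t + y t ^ 2)/4)
        (fun t htI => (hde t (hsub (hsubIcc htI))).hasDerivWithinAt) ?_ (convex_Icc _ _)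
        (left_mem_Icc.2 hx₀Icc.1) (right_mem_Icc.2 hx₀Icc.1)
      intro t htI
      have h1 : 1 ≤ y t := hlow t (hsubIcc htI)
      have h2 : y t ≤ 13/10 := hble t htI
      have h3 : 0 ≤ t := htI.1
      have h4 : t ≤ 2/5 := (hsubIcc htI).2
      rw [Real.norm_eq_abs, abs_le]
      constructor <;> nlinarith
    rw [h0, Real.norm_eq_abs, Real.norm_eq_abs, sub_zero, abs_of_nonneg hx₀Icc.1] at key
    have : 3/10 ≤ |y x₀ - 1| := le_trans (by linarith) (le_abs_self _)
    nlinarith [hx₀Icc.2]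
  -- p facts
  have hpbnd : ∀ t ∈ Icc (0:ℝ) (2/5), p t ∈ Icc (1:ℝ) (13/10) := by
    intro t ht
    rw [hp]
    constructor
    · nlinarith [ht.1, ht.2, pow_nonneg ht.1 2, pow_nonneg ht.1 3, pow_nonneg ht.1 4,
        pow_nonneg ht.1 5]
    · nlinarith [ht.1, ht.2, pow_nonneg ht.1 2, pow_nonneg ht.1 3, pow_nonneg ht.1 4,
        pow_nonneg ht.1 5]
  have hpceq : p = fun x => 1 + (1/4)*x + (3/16)*x^2 + (7/192)*x^3 + (1/96)*x^4 + (1/200)*x^5 := by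
    funext x; exact hp x
  have hpc : Continuous p := by
    rw [hpceq]
    exact (((((continuous_const.add (continuous_const.mul continuous_id)).add
      (continuous_const.mul (continuous_pow 2))).add
      (continuous_const.mul (continuous_pow 3))).add
      (continuous_const.mul (continuous_pow 4))).add
      (continuous_const.mul (continuous_pow 5)))
  have hpd : ∀ t : ℝ, HasDerivAt p (1/4 + 3/8*t + 7/64*t^2 + 1/24*t^3 + 1/40*t^4) t := by
    intro t
    rw [hpceq]
    have h1 : HasDerivAt (fun x : ℝ => 1 + (1/4)*x + (3/16)*x^2 + (7/192)*x^3 + (1/96)*x^4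
        + (1/200)*x^5)
        (0 + (1/4)*1 + (3/16)*(↑2*t^1) + (7/192)*(↑3*t^2) + (1/96)*(↑4*t^3) + (1/200)*(↑5*t^4))
        t := by
      exact ((((((hasDerivAt_const t (1:ℝ)).add ((hasDerivAt_id t).const_mul (1/4))).add
        ((hasDerivAt_pow 2 t).const_mul (3/16))).add
        ((hasDerivAt_pow 3 t).const_mul (7/192))).add
        ((hasDerivAt_pow 4 t).const_mul (1/96))).add
        ((hasDerivAt_pow 5 t).const_mul (1/200)))
    convert h1 using 1
    try (push_cast; ring)
  -- the Lipschitz field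
  have hv : ∀ t : ℝ, LipschitzOnWith (13/20) (fun z : ℝ => (t + z^2)/4) (Icc (1:ℝ) (13/10)) := by
    intro t
    refine LipschitzOnWith.of_dist_le_mul fun u hu w hw => ?_
    rw [Real.dist_eq, Real.dist_eq]
    have h1 : (t+u^2)/4 - (t+w^2)/4 = ((u+w)/4)*(u-w) := by ring
    rw [h1, abs_mul]
    have h2 : |(u+w)/4| ≤ 13/20 := by
      rw [abs_le]; constructor
      · nlinarith [hu.1, hw.1]
      · nlinarith [hu.2, hw.2]
    have h3 := mul_le_mul_of_nonneg_right h2 (abs_nonneg (u-w))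
    refine h3.trans ?_
    norm_num
  -- Grönwall stage
  have stage : ∀ a b δ : ℝ, 0 ≤ a → a ≤ b → b ≤ 2/5 → dist (y a) (p a) ≤ δ →
      ∀ t ∈ Icc a b, dist (y t) (p t) ≤
        gronwallBound δ (13/20) (0 + (33/5120*b^4 - 1109/153600*b^5)) (t - a) := by
    intro a b δ ha0 hab hb2 hδa
    have hIsub : Icc a b ⊆ Icc (0:ℝ) (2/5) := Icc_subset_Icc ha0 hb2
    refine dist_le_of_approx_trajectories_ODE_of_mem
      (v := fun t z => (t + z^2)/4) (s := fun _ => Icc (1:ℝ) (13/10)) (K := 13/20)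
      (fun t _ => hv t) (hcont.mono hIsub)
      (fun t ht => (hde t (hsub (hIsub (Ico_subset_Icc_self ht)))).hasDerivWithinAt)
      (fun t ht => by simp) (fun t ht => ⟨hlow t (hIsub (Ico_subset_Icc_self ht)),
        hup t (hIsub (Ico_subset_Icc_self ht))⟩)
      (hpc.continuousOn) (fun t ht => (hpd t).hasDerivWithinAt)
      (fun t ht => ?_) (fun t ht => hpbnd t (hIsub (Ico_subset_Icc_self ht))) hδa
    have ht0 : 0 ≤ t := le_trans ha0 ht.1
    have htb : t ≤ b := ht.2.le
    rw [Real.dist_eq, hp]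
    exact defect_bound t b ht0 htb hb2
  -- stage 1 : [0, 1/4]
  have c1 : ∀ t ∈ Icc (0:ℝ) (1/4), dist (y t) (p t) ≤ 55/10^7 := by
    intro t ht
    have h := stage 0 (1/4) 0 (by norm_num) (by norm_num) (by norm_num)
      (by rw [Real.dist_eq, h0, hp]; norm_num) t ht
    refine h.trans ((gb_le (le_refl 0) (by norm_num) (by simpa using ht.1)
      (by simpa using ht.2) (by norm_num)).trans (by norm_num))
  -- stage 2 : [1/4, 33/100]
  have c2 : ∀ t ∈ Icc (1/4:ℝ) (33/100), dist (y t) (p t) ≤ 99/10^7 := by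
    intro t ht
    have h := stage (1/4) (33/100) (55/10^7) (by norm_num) (by norm_num) (by norm_num)
      (c1 (1/4) (by norm_num)) t ht
    refine h.trans ((gb_le (h := 33/100 - 1/4) (by norm_num) (by norm_num)
      (by linarith [ht.1]) (by linarith [ht.2]) (by norm_num)).trans (by norm_num))
  -- stage 3 : [33/100, 2/5]
  have c3 : ∀ t ∈ Icc (33/100:ℝ) (2/5), dist (y t) (p t) ≤ 2/10^5 := by
    intro t ht
    have h := stage (33/100) (2/5) (99/10^7) (by norm_num) (by norm_num) (by norm_num)
      (c2 (33/100) (by norm_num)) t ht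
    refine h.trans ((gb_le (h := 2/5 - 33/100) (by norm_num) (by norm_num)
      (by linarith [ht.1]) (by linarith [ht.2]) (by norm_num)).trans (by norm_num))
  -- combine
  intro x hx
  rw [← Real.dist_eq]
  rcases le_or_gt x (1/4) with h1 | h1
  · exact (c1 x ⟨hx.1, h1⟩).trans (by norm_num)
  · rcases le_or_gt x (33/100) with h2 | h2
    · exact (c2 x ⟨h1.le, h2⟩).trans (by norm_num)
    · exact c3 x ⟨h2.le, hx.2⟩
end
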